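/- arXiv:2506.01452 — 7 statements merged into one kernel-verified Lean document; each statement's English description precedes it below -/
import Mathlib

section
/- Suppose the e-values are conditionally valid, i.e. E[e_j | F_{j-1}] ≤ 1 almost surely for every j ∈ H_0. Define the oracle e-value-based FDP estimate FDP*_e(t) = ∑_{j∈H_0(t)} α_j/(R_{j-1}+1). If E[FDP*_e(t)] ≤ α for every t ≥ 1, then FDR(t) ≤ α for every t ≥ 1. -/
open MeasureTheory

theorem eGAI_main_FDR_control
    {Ω : Type*} {m0 : MeasurableSpace Ω} {μ : Measure Ω} [IsProbabilityMeasure μ]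
    (ℱ : Filtration ℕ m0) (hF0 : ℱ 0 = ⊥)
    (e : ℕ → Ω → ℝ) (he_nonneg : ∀ t ω, 0 ≤ e t ω)
    (he_int : ∀ t, Integrable (e t) μ)
    (alv : ℕ → Ω → ℝ) (halv : ∀ t ω, alv t ω ∈ Set.Ioo (0:ℝ) 1)
    (halv_meas : ∀ t, 1 ≤ t → Measurable[ℱ (t-1)] (alv t))
    (δ : ℕ → Ω → ℝ)
    (hδ : ∀ t ω, δ t ω = if 1 / alv t ω ≤ e t ω then 1 else 0)
    (hδ_meas : ∀ t, Measurable[ℱ t] (δ t))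
    (H0 : Set ℕ) [DecidablePred (· ∈ H0)] (hH0 : ∀ j ∈ H0, 1 ≤ j)
    (R : ℕ → Ω → ℝ) (hR : ∀ t ω, R t ω = ∑ j ∈ Finset.Icc 1 t, δ j ω)
    (α : ℝ) (hα : α ∈ Set.Ioo (0:ℝ) 1)
    (hvalid : ∀ j ∈ H0, μ[e j | ℱ (j-1)] ≤ᵐ[μ] fun _ => 1)
    (hFDPstar : ∀ t, 1 ≤ t → ∫ ω, ∑ j ∈ (Finset.Icc 1 t).filter (· ∈ H0), alv j ω / (R (j-1) ω + 1) ∂μ ≤ α)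
    :
    ∀ t, 1 ≤ t → ∫ ω, (∑ j ∈ (Finset.Icc 1 t).filter (· ∈ H0), δ j ω) / max (R t ω) 1 ∂μ ≤ α := by
  classical
  intro t ht
  set S := (Finset.Icc 1 t).filter (· ∈ H0) with hS
  -- basic facts
  have hδnn : ∀ j ω, 0 ≤ δ j ω := by
    intro j ω; rw [hδ]; split <;> norm_num
  have hRnn : ∀ s ω, 0 ≤ R s ω := by
    intro s ω; rw [hR]; exact Finset.sum_nonneg fun j _ => hδnn j ω
  have hRmono : ∀ s s' : ℕ, s ≤ s' → ∀ ω, R s ω ≤ R s' ω := by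
    intro s s' hss ω; rw [hR, hR]
    exact Finset.sum_le_sum_of_subset_of_nonneg
      (Finset.Icc_subset_Icc_right hss) (fun j _ _ => hδnn j ω)
  have hRsucc : ∀ j : ℕ, 1 ≤ j → ∀ ω, R j ω = R (j-1) ω + δ j ω := by
    intro j hj ω
    obtain ⟨k, rfl⟩ : ∃ k, j = k + 1 := ⟨j - 1, by omega⟩
    simp only [Nat.add_sub_cancel]
    rw [hR, hR, Finset.sum_Icc_succ_top (by omega : 1 ≤ k + 1)]
  have hRmeas : ∀ s : ℕ, Measurable[ℱ s] (R s) := by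
    intro s
    have : R s = fun ω => ∑ j ∈ Finset.Icc 1 s, δ j ω := funext (hR s)
    rw [this]
    exact Finset.measurable_sum _ fun j hj =>
      (hδ_meas j).mono (ℱ.mono (Finset.mem_Icc.mp hj).2) le_rfl
  -- facts about members of S
  have hmemS : ∀ j ∈ S, 1 ≤ j ∧ j ≤ t ∧ j ∈ H0 := by
    intro j hj
    rw [hS, Finset.mem_filter, Finset.mem_Icc] at hj
    exact ⟨hj.1.1, hj.1.2, hj.2⟩
  -- the oracle weights
  set g : ℕ → Ω → ℝ := fun j ω => alv j ω / (R (j-1) ω + 1) with hg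
  have hd_pos : ∀ j ω, (0:ℝ) < R (j-1) ω + 1 := fun j ω => by linarith [hRnn (j-1) ω]
  have hg_nonneg : ∀ j ω, 0 ≤ g j ω := fun j ω =>
    div_nonneg (le_of_lt (halv j ω).1) (le_of_lt (hd_pos j ω))
  have hg_le_one : ∀ j ω, g j ω ≤ 1 := by
    intro j ω
    have h1 : g j ω ≤ alv j ω := div_le_self (le_of_lt (halv j ω).1) (by linarith [hRnn (j-1) ω])
    linarith [(halv j ω).2]
  have hg_meas : ∀ j, 1 ≤ j → Measurable[ℱ (j-1)] (g j) := fun j hj =>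
    (halv_meas j hj).div ((hRmeas (j-1)).add measurable_const)
  have hg_int : ∀ j, 1 ≤ j → Integrable (g j) μ := by
    intro j hj
    refine Integrable.mono' (integrable_const 1)
      ((hg_meas j hj).mono (ℱ.le _) le_rfl).aestronglyMeasurable ?_
    filter_upwards with ω
    rw [Real.norm_eq_abs, abs_of_nonneg (hg_nonneg j ω)]
    exact hg_le_one j ω
  have hge_int : ∀ j, 1 ≤ j → Integrable (fun ω => g j ω * e j ω) μ := by
    intro j hj
    exact (he_int j).bdd_mul (c := 1) ((hg_meas j hj).mono (ℱ.le _) le_rfl).aestronglyMeasurable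
      (ae_of_all _ fun ω => by rw [Real.norm_eq_abs, abs_of_nonneg (hg_nonneg j ω)]; exact hg_le_one j ω)
  -- pointwise inequality
  have step1 : ∀ ω, (∑ j ∈ S, δ j ω) / max (R t ω) 1 ≤ ∑ j ∈ S, g j ω * e j ω := by
    intro ω
    rw [Finset.sum_div]
    refine Finset.sum_le_sum fun j hj => ?_
    obtain ⟨hj1, hjt, _⟩ := hmemS j hj
    by_cases hc : 1 / alv j ω ≤ e j ω
    · have hδ1 : δ j ω = 1 := by rw [hδ, if_pos hc]
      have halvpos := (halv j ω).1
      have hae : 1 ≤ alv j ω * e j ω := by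
        have h1 := mul_le_mul_of_nonneg_left hc (le_of_lt halvpos)
        rwa [mul_one_div_cancel (ne_of_gt halvpos)] at h1
      have hmax : R (j-1) ω + 1 ≤ max (R t ω) 1 := by
        have h1 : R j ω = R (j-1) ω + 1 := by rw [hRsucc j hj1 ω, hδ1]
        have h2 := hRmono j t hjt ω
        exact le_max_of_le_left (by linarith)
      rw [hδ1, hg]
      rw [div_mul_eq_mul_div]
      calc 1 / max (R t ω) 1 ≤ 1 / (R (j-1) ω + 1) :=
            one_div_le_one_div_of_le (hd_pos j ω) hmax
        _ ≤ alv j ω * e j ω / (R (j-1) ω + 1) :=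
            (div_le_div_iff_of_pos_right (hd_pos j ω)).mpr hae
    · have hδ0 : δ j ω = 0 := by rw [hδ, if_neg hc]
      rw [hδ0, zero_div]
      exact mul_nonneg (hg_nonneg j ω) (he_nonneg j ω)
  -- per-term conditional expectation bound
  have key : ∀ j ∈ S, ∫ ω, g j ω * e j ω ∂μ ≤ ∫ ω, g j ω ∂μ := by
    intro j hj
    obtain ⟨hj1, _, hjH⟩ := hmemS j hj
    have hm : ℱ (j-1) ≤ m0 := ℱ.le _
    have hmul : μ[g j * e j | ℱ (j-1)] =ᵐ[μ] g j * μ[e j | ℱ (j-1)] :=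
      condExp_mul_of_stronglyMeasurable_left (hg_meas j hj1).stronglyMeasurable
        (hge_int j hj1) (he_int j)
    have hci : Integrable (fun ω => g j ω * (μ[e j | ℱ (j-1)]) ω) μ :=
      integrable_condExp.bdd_mul (c := 1) ((hg_meas j hj1).mono hm le_rfl).aestronglyMeasurable
        (ae_of_all _ fun ω => by rw [Real.norm_eq_abs, abs_of_nonneg (hg_nonneg j ω)]; exact hg_le_one j ω)
    calc ∫ ω, g j ω * e j ω ∂μ
        = ∫ ω, (μ[g j * e j | ℱ (j-1)]) ω ∂μ := (integral_condExp hm).symm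
      _ = ∫ ω, g j ω * (μ[e j | ℱ (j-1)]) ω ∂μ := integral_congr_ae hmul
      _ ≤ ∫ ω, g j ω ∂μ := by
          refine integral_mono_ae hci (hg_int j hj1) ?_
          filter_upwards [hvalid j hjH] with ω hω
          calc g j ω * (μ[e j | ℱ (j-1)]) ω ≤ g j ω * 1 :=
                mul_le_mul_of_nonneg_left hω (hg_nonneg j ω)
            _ = g j ω := mul_one _
  -- assemble
  have hInt2 : ∀ j ∈ S, Integrable (fun ω => g j ω * e j ω) μ :=
    fun j hj => hge_int j (hmemS j hj).1
  have hInt3 : ∀ j ∈ S, Integrable (g j) μ := fun j hj => hg_int j (hmemS j hj).1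
  calc ∫ ω, (∑ j ∈ S, δ j ω) / max (R t ω) 1 ∂μ
      ≤ ∫ ω, ∑ j ∈ S, g j ω * e j ω ∂μ := by
        refine integral_mono_of_nonneg ?_ (integrable_finset_sum S hInt2) (ae_of_all μ step1)
        filter_upwards with ω
        exact div_nonneg (Finset.sum_nonneg fun j _ => hδnn j ω)
          (le_trans zero_le_one (le_max_right _ _))
    _ = ∑ j ∈ S, ∫ ω, g j ω * e j ω ∂μ := integral_finset_sum S hInt2
    _ ≤ ∑ j ∈ S, ∫ ω, g j ω ∂μ := Finset.sum_le_sum key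
    _ = ∫ ω, ∑ j ∈ S, g j ω ∂μ := (integral_finset_sum S hInt3).symm
    _ ≤ α := hFDPstar t ht
end

section
/- Suppose the e-values are conditionally valid, i.e. E[e_j | F_{j-1}] ≤ 1 almost surely for every j ∈ H_0. If the testing levels satisfy, almost surely, ∑_{j=1}^t α_j/(R_{j-1}+1) ≤ α for every t ≥ 1, then FDR(t) ≤ α for every t ≥ 1. -/
open MeasureTheory

-- key integral inequality: E[f g] ≤ E[f] when f is m-measurable in [0,1] and E[g|m] ≤ 1
lemma aux_int {Ω : Type*} {m m0 : MeasurableSpace Ω} {μ : Measure Ω} [IsProbabilityMeasure μ]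
    (hm : m ≤ m0) (f g : Ω → ℝ) (hf : StronglyMeasurable[m] f)
    (hf0 : ∀ ω, 0 ≤ f ω) (hf1 : ∀ ω, f ω ≤ 1) (hg : Integrable g μ)
    (hcond : μ[g|m] ≤ᵐ[μ] fun _ => 1) :
    ∫ ω, f ω * g ω ∂μ ≤ ∫ ω, f ω ∂μ := by
  have hfbd : ∀ᵐ ω ∂μ, ‖f ω‖ ≤ 1 := ae_of_all _ fun ω => by
    rw [Real.norm_eq_abs, abs_of_nonneg (hf0 ω)]; exact hf1 ω
  have hfm0 : AEStronglyMeasurable f μ := (hf.mono hm).aestronglyMeasurable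
  have hfg : Integrable (f * g) μ := hg.bdd_mul hfm0 hfbd
  have hpull : μ[f * g|m] =ᵐ[μ] f * μ[g|m] :=
    condExp_stronglyMeasurable_mul_of_bound hm hf hg 1 hfbd
  have h1 : ∫ ω, f ω * g ω ∂μ = ∫ ω, (f * μ[g|m]) ω ∂μ := by
    rw [show (fun ω => f ω * g ω) = f * g from rfl,
      ← integral_condExp hm (f := f * g)]
    exact integral_congr_ae hpull
  rw [h1]
  have hint1 : Integrable (f * μ[g|m]) μ := integrable_condExp.bdd_mul hfm0 hfbd
  have hint2 : Integrable f μ := by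
    refine (integrable_const (1:ℝ)).mono' hfm0 hfbd
  refine integral_mono_ae hint1 hint2 ?_
  filter_upwards [hcond] with ω hω
  calc f ω * (μ[g|m]) ω ≤ f ω * 1 := mul_le_mul_of_nonneg_left hω (hf0 ω)
  _ = f ω := mul_one _

theorem eLORD_FDR_control
    {Ω : Type*} {m0 : MeasurableSpace Ω} {μ : Measure Ω} [IsProbabilityMeasure μ]
    (ℱ : Filtration ℕ m0) (hF0 : ℱ 0 = ⊥)
    (e : ℕ → Ω → ℝ) (he_nonneg : ∀ t ω, 0 ≤ e t ω)
    (he_int : ∀ t, Integrable (e t) μ)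
    (alv : ℕ → Ω → ℝ) (halv : ∀ t ω, alv t ω ∈ Set.Ioo (0:ℝ) 1)
    (halv_meas : ∀ t, 1 ≤ t → Measurable[ℱ (t-1)] (alv t))
    (δ : ℕ → Ω → ℝ)
    (hδ : ∀ t ω, δ t ω = if 1 / alv t ω ≤ e t ω then 1 else 0)
    (hδ_meas : ∀ t, Measurable[ℱ t] (δ t))
    (H0 : Set ℕ) [DecidablePred (· ∈ H0)] (hH0 : ∀ j ∈ H0, 1 ≤ j)
    (R : ℕ → Ω → ℝ) (hR : ∀ t ω, R t ω = ∑ j ∈ Finset.Icc 1 t, δ j ω)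
    (α : ℝ) (hα : α ∈ Set.Ioo (0:ℝ) 1)
    (hvalid : ∀ j ∈ H0, μ[e j | ℱ (j-1)] ≤ᵐ[μ] fun _ => 1)
    (hlevels : ∀ᵐ ω ∂μ, ∀ t, 1 ≤ t → (∑ j ∈ Finset.Icc 1 t, alv j ω / (R (j-1) ω + 1)) ≤ α)
    :
    ∀ t, 1 ≤ t → ∫ ω, (∑ j ∈ (Finset.Icc 1 t).filter (· ∈ H0), δ j ω) / max (R t ω) 1 ∂μ ≤ α := by
  intro t ht
  -- basic facts
  have hδ01 : ∀ j ω, 0 ≤ δ j ω ∧ δ j ω ≤ 1 := by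
    intro j ω; rw [hδ]; split <;> norm_num
  have hR0 : ∀ s ω, 0 ≤ R s ω := by
    intro s ω; rw [hR]; exact Finset.sum_nonneg fun j _ => (hδ01 j ω).1
  have hδmeas : ∀ j, Measurable (δ j) := fun j => (hδ_meas j).mono (ℱ.le j) le_rfl
  have hRmeasF : ∀ s, Measurable[ℱ s] (R s) := by
    intro s
    have : R s = fun ω => ∑ j ∈ Finset.Icc 1 s, δ j ω := funext fun ω => hR s ω
    rw [this]
    exact Finset.measurable_sum _ fun j hj =>
      (hδ_meas j).mono (ℱ.mono (Finset.mem_Icc.mp hj).2) le_rfl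
  have hRmeas : ∀ s, Measurable (R s) := fun s => (hRmeasF s).mono (ℱ.le s) le_rfl
  -- R monotone and step
  have hRstep : ∀ j ω, 1 ≤ j → R j ω = R (j-1) ω + δ j ω := by
    intro j ω hj
    obtain ⟨k, rfl⟩ := Nat.exists_eq_add_of_le hj
    simp only [Nat.add_sub_cancel_left, hR]
    rw [show 1 + k = k + 1 by ring, Finset.sum_Icc_succ_top (Nat.le_add_left 1 k)]
  have hRmono : ∀ j ω, j ≤ t → R j ω ≤ R t ω := by
    intro j ω hj
    rw [hR, hR]
    exact Finset.sum_le_sum_of_subset_of_nonneg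
      (Finset.Icc_subset_Icc_right hj) fun i _ _ => (hδ01 i ω).1
  set S := (Finset.Icc 1 t).filter (· ∈ H0) with hS
  -- pointwise bound
  have hpt : ∀ ω, (∑ j ∈ S, δ j ω) / max (R t ω) 1
      ≤ ∑ j ∈ S, (alv j ω / (R (j-1) ω + 1)) * e j ω := by
    intro ω
    rw [Finset.sum_div]
    refine Finset.sum_le_sum ?_
    intro j hj
    obtain ⟨hjI, _⟩ := Finset.mem_filter.mp hj
    obtain ⟨hj1, hjt⟩ := Finset.mem_Icc.mp hjI
    have hden : (0:ℝ) < R (j-1) ω + 1 := by linarith [hR0 (j-1) ω]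
    have halvj := halv j ω
    by_cases hsel : 1 / alv j ω ≤ e j ω
    · have hδ1 : δ j ω = 1 := by rw [hδ, if_pos hsel]
      have hae : 1 ≤ alv j ω * e j ω := by
        rw [div_le_iff₀ halvj.1] at hsel
        linarith [mul_comm (e j ω) (alv j ω)]
      have hmax : R (j-1) ω + 1 ≤ max (R t ω) 1 := by
        have := hRstep j ω hj1
        have := hRmono j ω hjt
        have : R (j-1) ω + 1 ≤ R t ω := by
          rw [hδ1] at *; linarith [hRstep j ω hj1, hRmono j ω hjt]
        exact le_trans this (le_max_left _ _)
      rw [hδ1]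
      calc 1 / max (R t ω) 1 ≤ 1 / (R (j-1) ω + 1) :=
            one_div_le_one_div_of_le hden hmax
      _ ≤ (alv j ω * e j ω) / (R (j-1) ω + 1) := by gcongr
      _ = (alv j ω / (R (j-1) ω + 1)) * e j ω := by ring
    · have hδ0 : δ j ω = 0 := by rw [hδ, if_neg hsel]
      rw [hδ0, zero_div]
      exact mul_nonneg (div_nonneg (le_of_lt halvj.1) (le_of_lt hden)) (he_nonneg j ω)
  -- define g j
  set g : ℕ → Ω → ℝ := fun j ω => alv j ω / (R (j-1) ω + 1) with hg
  have hg_mem : ∀ j ω, 1 ≤ j → 0 ≤ g j ω ∧ g j ω ≤ 1 := by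
    intro j ω hj
    have hden : (0:ℝ) < R (j-1) ω + 1 := by linarith [hR0 (j-1) ω]
    constructor
    · exact div_nonneg (le_of_lt (halv j ω).1) (le_of_lt hden)
    · rw [div_le_one hden]
      have := (halv j ω).2
      linarith [hR0 (j-1) ω]
  have hg_measF : ∀ j, 1 ≤ j → Measurable[ℱ (j-1)] (g j) := by
    intro j hj
    exact (halv_meas j hj).div ((hRmeasF (j-1)).add measurable_const)
  have hg_meas : ∀ j, 1 ≤ j → Measurable (g j) := fun j hj =>
    (hg_measF j hj).mono (ℱ.le (j-1)) le_rfl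
  -- integrability of each term g j * e j
  have hterm_int : ∀ j, 1 ≤ j → Integrable (fun ω => g j ω * e j ω) μ := by
    intro j hj
    refine (he_int j).bdd_mul (c := 1) ((hg_meas j hj).aestronglyMeasurable) ?_
    refine ae_of_all _ fun ω => ?_
    rw [Real.norm_eq_abs, abs_of_nonneg (hg_mem j ω hj).1]
    exact (hg_mem j ω hj).2
  -- LHS integrable
  have hLHS_meas : Measurable (fun ω => (∑ j ∈ S, δ j ω) / max (R t ω) 1) := by
    refine Measurable.div (Finset.measurable_sum _ fun j _ => hδmeas j) ?_
    exact (hRmeas t).max measurable_const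
  have hLHS_int : Integrable (fun ω => (∑ j ∈ S, δ j ω) / max (R t ω) 1) μ := by
    refine (integrable_const ((S.card : ℝ))).mono' hLHS_meas.aestronglyMeasurable ?_
    refine ae_of_all _ fun ω => ?_
    have hnum : 0 ≤ ∑ j ∈ S, δ j ω := Finset.sum_nonneg fun j _ => (hδ01 j ω).1
    have hmax1 : (1:ℝ) ≤ max (R t ω) 1 := le_max_right _ _
    rw [Real.norm_eq_abs, abs_of_nonneg (div_nonneg hnum (by linarith))]
    calc (∑ j ∈ S, δ j ω) / max (R t ω) 1 ≤ ∑ j ∈ S, δ j ω :=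
          div_le_self hnum hmax1
    _ ≤ ∑ j ∈ S, 1 := Finset.sum_le_sum fun j _ => (hδ01 j ω).2
    _ = (S.card : ℝ) := by simp
  -- step 1: integral_mono
  have step1 : ∫ ω, (∑ j ∈ S, δ j ω) / max (R t ω) 1 ∂μ
      ≤ ∫ ω, ∑ j ∈ S, g j ω * e j ω ∂μ := by
    refine integral_mono hLHS_int ?_ hpt
    exact integrable_finset_sum S fun j hj =>
      hterm_int j (hH0 j (Finset.mem_filter.mp hj).2)
  -- step 2: per term conditional bound
  have step2 : ∫ ω, ∑ j ∈ S, g j ω * e j ω ∂μ ≤ ∑ j ∈ S, ∫ ω, g j ω ∂μ := by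
    rw [integral_finset_sum S fun j hj =>
      hterm_int j (hH0 j (Finset.mem_filter.mp hj).2)]
    refine Finset.sum_le_sum fun j hj => ?_
    have hjH0 : j ∈ H0 := (Finset.mem_filter.mp hj).2
    have hj1 : 1 ≤ j := hH0 j hjH0
    exact aux_int (ℱ.le (j-1)) (g j) (e j)
      ((hg_measF j hj1).stronglyMeasurable)
      (fun ω => (hg_mem j ω hj1).1) (fun ω => (hg_mem j ω hj1).2)
      (he_int j) (hvalid j hjH0)
  -- step 3: sum of integrals of g ≤ α
  have hg_int : ∀ j, 1 ≤ j → Integrable (g j) μ := by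
    intro j hj
    refine (integrable_const (1:ℝ)).mono' (hg_meas j hj).aestronglyMeasurable ?_
    exact ae_of_all _ fun ω => by
      rw [Real.norm_eq_abs, abs_of_nonneg (hg_mem j ω hj).1]; exact (hg_mem j ω hj).2
  have step3 : ∑ j ∈ S, ∫ ω, g j ω ∂μ ≤ α := by
    have hsub : ∑ j ∈ S, ∫ ω, g j ω ∂μ ≤ ∑ j ∈ Finset.Icc 1 t, ∫ ω, g j ω ∂μ := by
      refine Finset.sum_le_sum_of_subset_of_nonneg (Finset.filter_subset _ _) ?_
      intro j hj _
      exact integral_nonneg fun ω => (hg_mem j ω (Finset.mem_Icc.mp hj).1).1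
    refine le_trans hsub ?_
    rw [← integral_finset_sum (Finset.Icc 1 t) fun j hj =>
      hg_int j (Finset.mem_Icc.mp hj).1]
    calc ∫ ω, ∑ j ∈ Finset.Icc 1 t, g j ω ∂μ ≤ ∫ _, α ∂μ := by
          refine integral_mono_ae (integrable_finset_sum _ fun j hj =>
            hg_int j (Finset.mem_Icc.mp hj).1) (integrable_const α) ?_
          filter_upwards [hlevels] with ω hω
          exact hω t ht
    _ = α := by simp
  linarith [step1, step2, step3]
end

section
/- Suppose the e-values are conditionally valid, i.e. E[e_j | F_{j-1}] ≤ 1 almost surely for every j ∈ H_0. If the testing levels satisfy, almost surely, ∑_{j=1}^t (α_j/(R_{j-1}+1)) · 1{e_j < 1/λ_j}/(1−λ_j) ≤ α for every t ≥ 1, then FDR(t) ≤ α for every t ≥ 1. -/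
open MeasureTheory

theorem eSAFFRON_FDR_control
    {Ω : Type*} {m0 : MeasurableSpace Ω} {μ : Measure Ω} [IsProbabilityMeasure μ]
    (ℱ : Filtration ℕ m0) (hF0 : ℱ 0 = ⊥)
    (e : ℕ → Ω → ℝ) (he_nonneg : ∀ t ω, 0 ≤ e t ω)
    (he_int : ∀ t, Integrable (e t) μ)
    (alv : ℕ → Ω → ℝ) (halv : ∀ t ω, alv t ω ∈ Set.Ioo (0:ℝ) 1)
    (halv_meas : ∀ t, 1 ≤ t → Measurable[ℱ (t-1)] (alv t))
    (δ : ℕ → Ω → ℝ)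
    (hδ : ∀ t ω, δ t ω = if 1 / alv t ω ≤ e t ω then 1 else 0)
    (hδ_meas : ∀ t, Measurable[ℱ t] (δ t))
    (H0 : Set ℕ) [DecidablePred (· ∈ H0)] (hH0 : ∀ j ∈ H0, 1 ≤ j)
    (R : ℕ → Ω → ℝ) (hR : ∀ t ω, R t ω = ∑ j ∈ Finset.Icc 1 t, δ j ω)
    (lam : ℕ → Ω → ℝ) (hlam : ∀ t ω, lam t ω ∈ Set.Ioo (0:ℝ) 1)
    (hlam_meas : ∀ t, 1 ≤ t → Measurable[ℱ (t-1)] (lam t))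
    (α : ℝ) (hα : α ∈ Set.Ioo (0:ℝ) 1)
    (hvalid : ∀ j ∈ H0, μ[e j | ℱ (j-1)] ≤ᵐ[μ] fun _ => 1)
    (hlevels : ∀ᵐ ω ∂μ, ∀ t, 1 ≤ t → (∑ j ∈ Finset.Icc 1 t,
        alv j ω / (R (j-1) ω + 1) * (if e j ω < 1 / lam j ω then 1 else 0) / (1 - lam j ω)) ≤ α)
    :
    ∀ t, 1 ≤ t → ∫ ω, (∑ j ∈ (Finset.Icc 1 t).filter (· ∈ H0), δ j ω) / max (R t ω) 1 ∂μ ≤ α := by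
  classical
  -- basic pointwise facts about δ
  have hδ01 : ∀ j ω, δ j ω = 0 ∨ δ j ω = 1 := by
    intro j ω; rw [hδ]; split <;> simp
  have hδ_nonneg : ∀ j ω, 0 ≤ δ j ω := by
    intro j ω; rcases hδ01 j ω with h | h <;> simp [h]
  have hδ_le_one : ∀ j ω, δ j ω ≤ 1 := by
    intro j ω; rcases hδ01 j ω with h | h <;> simp [h]
  have hR_nonneg : ∀ n ω, 0 ≤ R n ω := by
    intro n ω; rw [hR]; exact Finset.sum_nonneg fun j _ => hδ_nonneg j ω
  have hRpos : ∀ n ω, (0:ℝ) < R n ω + 1 := fun n ω => by linarith [hR_nonneg n ω]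
  -- R is nondecreasing relative to R (j-1) + δ j
  have hRstep : ∀ (j t : ℕ) (ω : Ω), 1 ≤ j → j ≤ t → R (j-1) ω + δ j ω ≤ R t ω := by
    intro j t ω hj hjt
    have hIcc : ∀ n : ℕ, Finset.Icc 1 n = Finset.Ioc 0 n := by
      intro n; rw [← Finset.Icc_add_one_left_eq_Ioc, zero_add]
    have hsplit : (∑ k ∈ Finset.Ioc 0 (j-1), δ k ω) + ∑ k ∈ Finset.Ioc (j-1) t, δ k ω
        = ∑ k ∈ Finset.Ioc 0 t, δ k ω :=
      Finset.sum_Ioc_consecutive _ (Nat.zero_le _) (le_trans (Nat.sub_le _ _) hjt)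
    have hmem : j ∈ Finset.Ioc (j-1) t := by
      rw [Finset.mem_Ioc]
      exact ⟨Nat.sub_lt (lt_of_lt_of_le Nat.zero_lt_one hj) Nat.zero_lt_one, hjt⟩
    have hsingle : δ j ω ≤ ∑ k ∈ Finset.Ioc (j-1) t, δ k ω :=
      Finset.single_le_sum (fun k _ => hδ_nonneg k ω) hmem
    rw [hR (j-1), hR t, hIcc, hIcc]
    linarith
  -- measurability
  have hδ_meas0 : ∀ j, Measurable (δ j) := fun j => (hδ_meas j).mono (ℱ.le j) le_rfl
  have hR_measF : ∀ n, Measurable[ℱ n] (R n) := by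
    intro n
    have h1 : Measurable[ℱ n] fun ω => ∑ j ∈ Finset.Icc 1 n, δ j ω :=
      Finset.measurable_sum _ fun j hj =>
        (hδ_meas j).mono (ℱ.mono (Finset.mem_Icc.mp hj).2) le_rfl
    have h2 : R n = fun ω => ∑ j ∈ Finset.Icc 1 n, δ j ω := funext fun ω => hR n ω
    rw [h2]; exact h1
  have hR_meas0 : ∀ n, Measurable (R n) := fun n => (hR_measF n).mono (ℱ.le n) le_rfl
  -- nonnegativity of the "budget" terms
  have hG_nonneg : ∀ j ω, 0 ≤ alv j ω / (R (j-1) ω + 1) *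
      (if e j ω < 1 / lam j ω then (1:ℝ) else 0) / (1 - lam j ω) := by
    intro j ω
    have h3 : (0:ℝ) ≤ 1 - lam j ω := by linarith [(hlam j ω).2]
    apply div_nonneg _ h3
    apply mul_nonneg (div_nonneg (halv j ω).1.le (hRpos (j-1) ω).le)
    split <;> norm_num
  -- a.e. bound on each budget term
  have hGbound : ∀ j, 1 ≤ j → ∀ᵐ ω ∂μ, alv j ω / (R (j-1) ω + 1) *
      (if e j ω < 1 / lam j ω then (1:ℝ) else 0) / (1 - lam j ω) ≤ α := by
    intro j hj
    filter_upwards [hlevels] with ω hω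
    calc alv j ω / (R (j-1) ω + 1) * (if e j ω < 1 / lam j ω then (1:ℝ) else 0) / (1 - lam j ω)
        ≤ ∑ i ∈ Finset.Icc 1 j, alv i ω / (R (i-1) ω + 1) *
            (if e i ω < 1 / lam i ω then (1:ℝ) else 0) / (1 - lam i ω) :=
          Finset.single_le_sum (fun i _ => hG_nonneg i ω) (Finset.mem_Icc.mpr ⟨hj, le_rfl⟩)
      _ ≤ α := hω j hj
  -- AE strong measurability of the indicator
  have hind_aesm : ∀ j, 1 ≤ j →
      AEStronglyMeasurable (fun ω => if e j ω < 1 / lam j ω then (1:ℝ) else 0) μ := by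
    intro j hj
    have hlam0 : Measurable (lam j) := (hlam_meas j hj).mono (ℱ.le _) le_rfl
    have hae : AEMeasurable (e j) μ := (he_int j).aemeasurable
    have hmeas : Measurable fun ω => if hae.mk (e j) ω < 1 / lam j ω then (1:ℝ) else 0 := by
      have hs : MeasurableSet {ω | hae.mk (e j) ω < 1 / lam j ω} :=
        measurableSet_lt hae.measurable_mk (measurable_const.div hlam0)
      exact Measurable.ite hs measurable_const measurable_const
    refine hmeas.aestronglyMeasurable.congr ?_
    filter_upwards [hae.ae_eq_mk] with ω hω
    rw [← hω]
  -- integrability of the budget terms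
  have hG_int : ∀ j, 1 ≤ j → Integrable (fun ω => alv j ω / (R (j-1) ω + 1) *
      (if e j ω < 1 / lam j ω then (1:ℝ) else 0) / (1 - lam j ω)) μ := by
    intro j hj
    have halv0 : Measurable (alv j) := (halv_meas j hj).mono (ℱ.le _) le_rfl
    have hlam0 : Measurable (lam j) := (hlam_meas j hj).mono (ℱ.le _) le_rfl
    have haesm : AEStronglyMeasurable (fun ω => alv j ω / (R (j-1) ω + 1) *
        (if e j ω < 1 / lam j ω then (1:ℝ) else 0) / (1 - lam j ω)) μ := by
      have h1 : AEMeasurable (fun ω => alv j ω / (R (j-1) ω + 1)) μ :=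
        (halv0.div ((hR_meas0 _).add measurable_const)).aemeasurable
      have h2 : AEMeasurable (fun ω => if e j ω < 1 / lam j ω then (1:ℝ) else 0) μ :=
        (hind_aesm j hj).aemeasurable
      exact ((h1.mul h2).div ((measurable_const.sub hlam0).aemeasurable)).aestronglyMeasurable
    refine Integrable.mono' (integrable_const α) haesm ?_
    filter_upwards [hGbound j hj] with ω hω
    rwa [Real.norm_eq_abs, abs_of_nonneg (hG_nonneg j ω)]
  -- integrability of δ j / (R (j-1) + 1)
  have hδdiv_int : ∀ j, Integrable (fun ω => δ j ω / (R (j-1) ω + 1)) μ := by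
    intro j
    refine Integrable.mono' (integrable_const 1)
      ((hδ_meas0 j).div ((hR_meas0 _).add measurable_const)).aestronglyMeasurable ?_
    refine Filter.Eventually.of_forall fun ω => ?_
    rw [Real.norm_eq_abs, abs_of_nonneg (div_nonneg (hδ_nonneg j ω) (hRpos _ ω).le)]
    calc δ j ω / (R (j-1) ω + 1) ≤ δ j ω / 1 :=
          div_le_div_of_nonneg_left (hδ_nonneg j ω) one_pos (by linarith [hR_nonneg (j-1) ω])
      _ ≤ 1 := by rw [div_one]; exact hδ_le_one j ω
  -- the key per-index inequality
  have key : ∀ j, 1 ≤ j → j ∈ H0 →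
      ∫ ω, δ j ω / (R (j-1) ω + 1) ∂μ ≤
      ∫ ω, alv j ω / (R (j-1) ω + 1) *
        (if e j ω < 1 / lam j ω then (1:ℝ) else 0) / (1 - lam j ω) ∂μ := by
    intro j hj hj0
    have hm : ℱ (j-1) ≤ m0 := ℱ.le _
    haveI : SigmaFinite (μ.trim hm) := by infer_instance
    set cfun : Ω → ℝ := fun ω => alv j ω / (R (j-1) ω + 1) with hcfun
    set hind : Ω → ℝ := fun ω => if e j ω < 1 / lam j ω then (1:ℝ) else 0 with hhind
    set ffun : Ω → ℝ := fun ω => cfun ω / (1 - lam j ω) with hffun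
    have hlam_pos : ∀ ω, 0 < lam j ω := fun ω => (hlam j ω).1
    have hlam_lt1 : ∀ ω, lam j ω < 1 := fun ω => (hlam j ω).2
    have h1lam_pos : ∀ ω, (0:ℝ) < 1 - lam j ω := fun ω => by linarith [hlam_lt1 ω]
    -- measurability
    have halvF : Measurable[ℱ (j-1)] (alv j) := halv_meas j hj
    have hlamF : Measurable[ℱ (j-1)] (lam j) := hlam_meas j hj
    have hcF : Measurable[ℱ (j-1)] cfun := halvF.div ((hR_measF (j-1)).add measurable_const)
    have hfF : Measurable[ℱ (j-1)] ffun := hcF.div (measurable_const.sub hlamF)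
    have hc0 : Measurable cfun := hcF.mono hm le_rfl
    have hlam0 : Measurable (lam j) := hlamF.mono hm le_rfl
    -- bounds on cfun
    have hc_nonneg : ∀ ω, 0 ≤ cfun ω := fun ω =>
      div_nonneg (halv j ω).1.le (hRpos _ ω).le
    have hc_le_one : ∀ ω, cfun ω ≤ 1 := by
      intro ω
      rw [hcfun]
      rw [div_le_one (hRpos _ ω)]
      linarith [(halv j ω).2, hR_nonneg (j-1) ω]
    -- integrability of various products
    have hc_int : Integrable cfun μ := by
      refine Integrable.mono' (integrable_const 1) hc0.aestronglyMeasurable ?_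
      exact Filter.Eventually.of_forall fun ω => by
        rw [Real.norm_eq_abs, abs_of_nonneg (hc_nonneg ω)]; exact hc_le_one ω
    have hce_int : Integrable (cfun * e j) μ := by
      have := Integrable.bdd_mul (he_int j) hc0.aestronglyMeasurable
        (c := 1) (Filter.Eventually.of_forall fun ω => by rw [Real.norm_eq_abs, abs_of_nonneg (hc_nonneg ω)]; exact hc_le_one ω)
      exact this
    have hlame_int : Integrable (lam j * e j) μ := by
      refine Integrable.bdd_mul (he_int j) hlam0.aestronglyMeasurable (c := 1) (Filter.Eventually.of_forall fun ω => ?_)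
      rw [Real.norm_eq_abs, abs_of_nonneg (hlam_pos ω).le]
      exact (hlam_lt1 ω).le
    have hind_int : Integrable hind μ := by
      refine Integrable.mono' (integrable_const 1) (hind_aesm j hj) ?_
      refine Filter.Eventually.of_forall fun ω => ?_
      show ‖if e j ω < 1 / lam j ω then (1:ℝ) else 0‖ ≤ 1
      split_ifs <;> simp
    -- rewrite the budget term as ffun * hind
    have hGf : (fun ω => alv j ω / (R (j-1) ω + 1) *
        (if e j ω < 1 / lam j ω then (1:ℝ) else 0) / (1 - lam j ω)) = ffun * hind := by
      funext ω
      show alv j ω / (R (j-1) ω + 1) * _ / (1 - lam j ω) = cfun ω / (1 - lam j ω) * hind ω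
      rw [mul_div_right_comm]
    have hfh_int : Integrable (ffun * hind) μ := hGf ▸ hG_int j hj
    -- Step A : ∫ δ/(R+1) ≤ ∫ cfun * e
    have hstepA : ∫ ω, δ j ω / (R (j-1) ω + 1) ∂μ ≤ ∫ ω, (cfun * e j) ω ∂μ := by
      refine integral_mono (hδdiv_int j) hce_int fun ω => ?_
      have hδle : δ j ω ≤ alv j ω * e j ω := by
        rw [hδ]
        split_ifs with h
        · rw [div_le_iff₀ (halv j ω).1] at h
          nlinarith
        · exact mul_nonneg (halv j ω).1.le (he_nonneg j ω)
      have h2 : δ j ω / (R (j-1) ω + 1) ≤ alv j ω * e j ω / (R (j-1) ω + 1) :=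
        (div_le_div_iff_of_pos_right (hRpos _ ω)).mpr hδle
      calc δ j ω / (R (j-1) ω + 1) ≤ alv j ω * e j ω / (R (j-1) ω + 1) := h2
        _ = cfun ω * e j ω := mul_div_right_comm _ _ _
        _ = (cfun * e j) ω := rfl
    -- Step B : ∫ cfun * e ≤ ∫ cfun
    have hpull1 : μ[cfun * e j | ℱ (j-1)] =ᵐ[μ] cfun * μ[e j | ℱ (j-1)] :=
      condExp_mul_of_stronglyMeasurable_left hcF.stronglyMeasurable hce_int (he_int j)
    have hcE_int : Integrable (cfun * μ[e j | ℱ (j-1)]) μ := by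
      have := Integrable.bdd_mul (integrable_condExp : Integrable (μ[e j | ℱ (j-1)]) μ) hc0.aestronglyMeasurable
        (c := 1) (Filter.Eventually.of_forall fun ω => by rw [Real.norm_eq_abs, abs_of_nonneg (hc_nonneg ω)]; exact hc_le_one ω)
      exact this
    have hstepB : ∫ ω, (cfun * e j) ω ∂μ ≤ ∫ ω, cfun ω ∂μ := by
      calc ∫ ω, (cfun * e j) ω ∂μ
          = ∫ ω, (μ[cfun * e j | ℱ (j-1)]) ω ∂μ := (integral_condExp hm).symm
        _ = ∫ ω, (cfun * μ[e j | ℱ (j-1)]) ω ∂μ := integral_congr_ae hpull1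
        _ ≤ ∫ ω, cfun ω ∂μ := by
            refine integral_mono_ae hcE_int hc_int ?_
            filter_upwards [hvalid j hj0] with ω hω
            exact mul_le_of_le_one_right (hc_nonneg ω) hω
    -- Step C : ∫ cfun ≤ ∫ ffun * hind
    have hpull3 : μ[ffun * hind | ℱ (j-1)] =ᵐ[μ] ffun * μ[hind | ℱ (j-1)] :=
      condExp_mul_of_stronglyMeasurable_left hfF.stronglyMeasurable hfh_int hind_int
    have hpull2 : μ[lam j * e j | ℱ (j-1)] =ᵐ[μ] lam j * μ[e j | ℱ (j-1)] :=
      condExp_mul_of_stronglyMeasurable_left hlamF.stronglyMeasurable hlame_int (he_int j)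
    have hsub_int : Integrable ((fun _ : Ω => (1:ℝ)) - lam j * e j) μ :=
      (integrable_const 1).sub hlame_int
    have hlow_pt : ∀ ω, ((fun _ : Ω => (1:ℝ)) - lam j * e j) ω ≤ hind ω := by
      intro ω
      show 1 - lam j ω * e j ω ≤ hind ω
      rw [hhind]; simp only []
      split_ifs with h
      · have : 0 ≤ lam j ω * e j ω := mul_nonneg (hlam_pos ω).le (he_nonneg j ω)
        linarith
      · push_neg at h
        rw [div_le_iff₀ (hlam_pos ω)] at h
        nlinarith
    have hmono : μ[(fun _ : Ω => (1:ℝ)) - lam j * e j | ℱ (j-1)] ≤ᵐ[μ] μ[hind | ℱ (j-1)] :=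
      condExp_mono hsub_int hind_int (Filter.Eventually.of_forall hlow_pt)
    have hsub_eq : μ[(fun _ : Ω => (1:ℝ)) - lam j * e j | ℱ (j-1)]
        =ᵐ[μ] (fun _ : Ω => (1:ℝ)) - lam j * μ[e j | ℱ (j-1)] := by
      have h1 := condExp_sub (m := ℱ (j-1)) (μ := μ) (integrable_const (1:ℝ)) hlame_int
      refine h1.trans ?_
      filter_upwards [hpull2] with ω hω2
      show (μ[fun _ : Ω => (1:ℝ) | ℱ (j-1)]) ω - (μ[lam j * e j | ℱ (j-1)]) ω = _
      rw [hω2, condExp_const hm (1:ℝ) (μ := μ)]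
      simp [Pi.sub_apply]
    -- a.e. lower bound on condexp of hind
    have hindlow : ∀ᵐ ω ∂μ, 1 - lam j ω ≤ (μ[hind | ℱ (j-1)]) ω := by
      filter_upwards [hmono, hsub_eq, hvalid j hj0] with ω h1 h2 h3
      have h4 : 1 - lam j ω * (μ[e j | ℱ (j-1)]) ω ≤ (μ[hind | ℱ (j-1)]) ω := by
        rw [h2] at h1
        exact h1
      have h5 : lam j ω * (μ[e j | ℱ (j-1)]) ω ≤ lam j ω :=
        mul_le_of_le_one_right (hlam_pos ω).le h3
      linarith
    have hclow : ∀ᵐ ω ∂μ, cfun ω ≤ (μ[ffun * hind | ℱ (j-1)]) ω := by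
      filter_upwards [hpull3, hindlow] with ω h1 h2
      rw [h1]
      show cfun ω ≤ ffun ω * (μ[hind | ℱ (j-1)]) ω
      have hf_nonneg : 0 ≤ ffun ω := div_nonneg (hc_nonneg ω) (h1lam_pos ω).le
      calc cfun ω = ffun ω * (1 - lam j ω) := by
            rw [hffun]; simp only []
            rw [div_mul_cancel₀ _ (ne_of_gt (h1lam_pos ω))]
        _ ≤ ffun ω * (μ[hind | ℱ (j-1)]) ω := mul_le_mul_of_nonneg_left h2 hf_nonneg
    have hstepC : ∫ ω, cfun ω ∂μ ≤ ∫ ω, (ffun * hind) ω ∂μ := by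
      calc ∫ ω, cfun ω ∂μ ≤ ∫ ω, (μ[ffun * hind | ℱ (j-1)]) ω ∂μ :=
            integral_mono_ae hc_int integrable_condExp hclow
        _ = ∫ ω, (ffun * hind) ω ∂μ := integral_condExp hm
    calc ∫ ω, δ j ω / (R (j-1) ω + 1) ∂μ ≤ ∫ ω, (cfun * e j) ω ∂μ := hstepA
      _ ≤ ∫ ω, cfun ω ∂μ := hstepB
      _ ≤ ∫ ω, (ffun * hind) ω ∂μ := hstepC
      _ = ∫ ω, alv j ω / (R (j-1) ω + 1) *
            (if e j ω < 1 / lam j ω then (1:ℝ) else 0) / (1 - lam j ω) ∂μ := by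
          rw [hGf]
  -- assembly
  intro t ht
  set S : Finset ℕ := (Finset.Icc 1 t).filter (· ∈ H0) with hS
  -- pointwise bound on the FDP
  have hstep0 : ∀ ω, (∑ j ∈ S, δ j ω) / max (R t ω) 1 ≤
      ∑ j ∈ S, δ j ω / (R (j-1) ω + 1) := by
    intro ω
    rw [Finset.sum_div]
    refine Finset.sum_le_sum fun j hjS => ?_
    obtain ⟨hj1, hjt⟩ := Finset.mem_Icc.mp (Finset.mem_filter.mp hjS).1
    rcases hδ01 j ω with h0 | h1
    · simp [h0]
    · have hRt : R (j-1) ω + 1 ≤ max (R t ω) 1 := by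
        refine le_trans ?_ (le_max_left _ _)
        have := hRstep j t ω hj1 hjt
        rw [h1] at this
        exact this
      exact div_le_div_of_nonneg_left (hδ_nonneg j ω) (hRpos _ ω) hRt
  -- integrability of the FDP
  have hFDP_int : Integrable (fun ω => (∑ j ∈ S, δ j ω) / max (R t ω) 1) μ := by
    have hmeas : Measurable fun ω => (∑ j ∈ S, δ j ω) / max (R t ω) 1 :=
      (Finset.measurable_sum _ fun j _ => hδ_meas0 j).div ((hR_meas0 t).max measurable_const)
    refine Integrable.mono' (integrable_const (S.card : ℝ)) hmeas.aestronglyMeasurable ?_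
    refine Filter.Eventually.of_forall fun ω => ?_
    have hsum_nonneg : 0 ≤ ∑ j ∈ S, δ j ω := Finset.sum_nonneg fun j _ => hδ_nonneg j ω
    have hsum_le : ∑ j ∈ S, δ j ω ≤ (S.card : ℝ) := by
      calc ∑ j ∈ S, δ j ω ≤ ∑ _j ∈ S, (1:ℝ) := Finset.sum_le_sum fun j _ => hδ_le_one j ω
        _ = (S.card : ℝ) := by simp
    have hmax1 : (1:ℝ) ≤ max (R t ω) 1 := le_max_right _ _
    rw [Real.norm_eq_abs, abs_of_nonneg (div_nonneg hsum_nonneg (by linarith))]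
    calc (∑ j ∈ S, δ j ω) / max (R t ω) 1 ≤ (∑ j ∈ S, δ j ω) / 1 :=
          div_le_div_of_nonneg_left hsum_nonneg one_pos hmax1
      _ = ∑ j ∈ S, δ j ω := div_one _
      _ ≤ (S.card : ℝ) := hsum_le
  have hsum_int : Integrable (fun ω => ∑ j ∈ S, δ j ω / (R (j-1) ω + 1)) μ :=
    integrable_finset_sum S fun j _ => hδdiv_int j
  calc ∫ ω, (∑ j ∈ S, δ j ω) / max (R t ω) 1 ∂μ
      ≤ ∫ ω, ∑ j ∈ S, δ j ω / (R (j-1) ω + 1) ∂μ :=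
        integral_mono hFDP_int hsum_int hstep0
    _ = ∑ j ∈ S, ∫ ω, δ j ω / (R (j-1) ω + 1) ∂μ := integral_finset_sum S fun j _ => hδdiv_int j
    _ ≤ ∑ j ∈ S, ∫ ω, alv j ω / (R (j-1) ω + 1) *
          (if e j ω < 1 / lam j ω then (1:ℝ) else 0) / (1 - lam j ω) ∂μ := by
        refine Finset.sum_le_sum fun j hjS => ?_
        have hjH0 : j ∈ H0 := (Finset.mem_filter.mp hjS).2
        exact key j (hH0 j hjH0) hjH0
    _ ≤ ∑ j ∈ Finset.Icc 1 t, ∫ ω, alv j ω / (R (j-1) ω + 1) *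
          (if e j ω < 1 / lam j ω then (1:ℝ) else 0) / (1 - lam j ω) ∂μ := by
        refine Finset.sum_le_sum_of_subset_of_nonneg (Finset.filter_subset _ _) ?_
        intro j hj _
        exact integral_nonneg fun ω => hG_nonneg j ω
    _ = ∫ ω, ∑ j ∈ Finset.Icc 1 t, alv j ω / (R (j-1) ω + 1) *
          (if e j ω < 1 / lam j ω then (1:ℝ) else 0) / (1 - lam j ω) ∂μ :=
        (integral_finset_sum _ fun j hj => hG_int j (Finset.mem_Icc.mp hj).1).symm
    _ ≤ ∫ _ω, α ∂μ := by
        refine integral_mono_ae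
          (integrable_finset_sum _ fun j hj => hG_int j (Finset.mem_Icc.mp hj).1)
          (integrable_const α) ?_
        filter_upwards [hlevels] with ω hω
        exact hω t ht
    _ = α := by simp
end

section
/- Suppose the e-values are conditionally valid, i.e. E[e_j | F_{j-1}] ≤ 1 almost surely for every j ∈ H_0. Define the oracle e-value-based estimate of mem-FDP, mem-FDP*(t) = ∑_{j∈H_0(t)} α_j/(d·R^d_{j-1} + 1). If E[mem-FDP*(t)] ≤ α for every t ≥ 1, then mem-FDR(t) ≤ α for every t ≥ 1. -/
open MeasureTheory

lemma integral_mul_le_of_condexp_le_one {Ω : Type*} {m m0 : MeasurableSpace Ω}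
    {μ : Measure Ω} [IsProbabilityMeasure μ] (hm : m ≤ m0)
    {f g : Ω → ℝ} (hf : Integrable f μ) (hg : StronglyMeasurable[m] g)
    (hg0 : ∀ ω, 0 ≤ g ω) (hg1 : ∀ ω, g ω ≤ 1)
    (hcond : μ[f | m] ≤ᵐ[μ] fun _ => 1) :
    ∫ ω, g ω * f ω ∂μ ≤ ∫ ω, g ω ∂μ := by
  have hgm0 : AEStronglyMeasurable g μ := (hg.mono hm).aestronglyMeasurable
  have hbdd : ∀ x, ‖g x‖ ≤ 1 := fun x => by
    rw [Real.norm_eq_abs, abs_of_nonneg (hg0 x)]; exact hg1 x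
  have hg_int : Integrable g μ := by
    simpa using (integrable_const (1 : ℝ)).bdd_mul hgm0 (ae_of_all _ hbdd)
  have hmul_int : Integrable (fun x => g x * (μ[f|m]) x) μ :=
    integrable_condExp.bdd_mul hgm0 (ae_of_all _ hbdd)
  calc ∫ ω, g ω * f ω ∂μ = ∫ ω, (μ[(fun ω => g ω * f ω)|m]) ω ∂μ :=
        (integral_condExp hm).symm
    _ = ∫ ω, g ω * (μ[f|m]) ω ∂μ := by
        refine integral_congr_ae ?_
        have := condExp_stronglyMeasurable_mul_of_bound hm hg hf 1 (ae_of_all _ hbdd)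
        exact this
    _ ≤ ∫ ω, g ω ∂μ := by
        refine integral_mono_ae hmul_int hg_int ?_
        filter_upwards [hcond] with ω hω
        simpa using mul_le_of_le_one_right (hg0 ω) hω

theorem memFDR_control_evalues
    {Ω : Type*} {m0 : MeasurableSpace Ω} {μ : Measure Ω} [IsProbabilityMeasure μ]
    (ℱ : Filtration ℕ m0) (hF0 : ℱ 0 = ⊥)
    (e : ℕ → Ω → ℝ) (he_nonneg : ∀ t ω, 0 ≤ e t ω)
    (he_int : ∀ t, Integrable (e t) μ)
    (alv : ℕ → Ω → ℝ) (halv : ∀ t ω, alv t ω ∈ Set.Ioo (0:ℝ) 1)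
    (halv_meas : ∀ t, 1 ≤ t → Measurable[ℱ (t-1)] (alv t))
    (δ : ℕ → Ω → ℝ)
    (hδ : ∀ t ω, δ t ω = if 1 / alv t ω ≤ e t ω then 1 else 0)
    (hδ_meas : ∀ t, Measurable[ℱ t] (δ t))
    (H0 : Set ℕ) [DecidablePred (· ∈ H0)] (hH0 : ∀ j ∈ H0, 1 ≤ j)
    (d : ℝ) (hd : d ∈ Set.Ioc (0:ℝ) 1)
    (Rd : ℕ → Ω → ℝ) (hRd : ∀ t ω, Rd t ω = ∑ j ∈ Finset.Icc 1 t, d ^ (t - j) * δ j ω)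
    (α : ℝ) (hα : α ∈ Set.Ioo (0:ℝ) 1)
    (hvalid : ∀ j ∈ H0, μ[e j | ℱ (j-1)] ≤ᵐ[μ] fun _ => 1)
    (hFDPstar : ∀ t, 1 ≤ t → ∫ ω, ∑ j ∈ (Finset.Icc 1 t).filter (· ∈ H0), alv j ω / (d * Rd (j-1) ω + 1) ∂μ ≤ α)
    :
    ∀ t, 1 ≤ t → ∫ ω, (∑ j ∈ (Finset.Icc 1 t).filter (· ∈ H0), d ^ (t - j) * δ j ω) / max (Rd t ω) 1 ∂μ ≤ α := by
  obtain ⟨hd0, hd1⟩ := hd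
  -- basic facts about δ
  have hδ0 : ∀ j ω, 0 ≤ δ j ω := by
    intro j ω; rw [hδ]; split <;> norm_num
  have hδle1 : ∀ j ω, δ j ω ≤ 1 := by
    intro j ω; rw [hδ]; split <;> norm_num
  -- Rd nonneg
  have hRd0 : ∀ s ω, 0 ≤ Rd s ω := by
    intro s ω; rw [hRd]
    exact Finset.sum_nonneg fun i _ => mul_nonneg (pow_nonneg hd0.le _) (hδ0 i ω)
  -- denominator facts
  have hD1 : ∀ j ω, (1:ℝ) ≤ d * Rd j ω + 1 := by
    intro j ω; nlinarith [hRd0 j ω]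
  have hD0 : ∀ j ω, (0:ℝ) < d * Rd j ω + 1 := fun j ω => lt_of_lt_of_le one_pos (hD1 j ω)
  -- g bounds
  have hg0 : ∀ j ω, 0 ≤ alv j ω / (d * Rd (j-1) ω + 1) :=
    fun j ω => div_nonneg (halv j ω).1.le (hD0 _ ω).le
  have hg1 : ∀ j ω, alv j ω / (d * Rd (j-1) ω + 1) ≤ 1 := by
    intro j ω
    rw [div_le_one (hD0 _ ω)]
    exact le_trans (halv j ω).2.le (hD1 _ ω)
  -- measurability of Rd
  have hRd_meas : ∀ s, Measurable[ℱ s] (Rd s) := by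
    intro s
    have : Rd s = fun ω => ∑ j ∈ Finset.Icc 1 s, d ^ (s - j) * δ j ω := funext (hRd s)
    rw [this]
    refine Finset.measurable_sum _ fun i hi => ?_
    exact measurable_const.mul ((hδ_meas i).mono (ℱ.mono (Finset.mem_Icc.mp hi).2) le_rfl)
  -- measurability of g
  have hg_meas : ∀ j, 1 ≤ j →
      Measurable[ℱ (j-1)] (fun ω => alv j ω / (d * Rd (j-1) ω + 1)) := by
    intro j hj
    exact (halv_meas j hj).div ((measurable_const.mul (hRd_meas (j-1))).add measurable_const)
  -- recurrence : Rd (k+1) = δ (k+1) + d * Rd k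
  have hrec : ∀ (k : ℕ) ω, Rd (k+1) ω = δ (k+1) ω + d * Rd k ω := by
    intro k ω
    rw [hRd, hRd, Finset.sum_Icc_succ_top (Nat.one_le_iff_ne_zero.mpr (Nat.succ_ne_zero k)),
      Nat.sub_self, pow_zero, one_mul, Finset.mul_sum, add_comm]
    congr 1
    refine Finset.sum_congr rfl fun i hi => ?_
    have hik : i ≤ k := (Finset.mem_Icc.mp hi).2
    have : k + 1 - i = (k - i) + 1 := by omega
    rw [this, pow_succ, mul_comm (d ^ (k-i)) d, mul_assoc]
  -- domination : d^(t-j) * Rd j ≤ Rd t for j ≤ t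
  have hdom : ∀ (j t : ℕ) ω, j ≤ t → d ^ (t - j) * Rd j ω ≤ Rd t ω := by
    intro j t ω hjt
    rw [hRd j, hRd t, Finset.mul_sum]
    have heq : ∀ i ∈ Finset.Icc 1 j,
        d ^ (t - j) * (d ^ (j - i) * δ i ω) = d ^ (t - i) * δ i ω := by
      intro i hi
      have hij : i ≤ j := (Finset.mem_Icc.mp hi).2
      rw [← mul_assoc, ← pow_add]
      congr 2
      omega
    rw [Finset.sum_congr rfl heq]
    refine Finset.sum_le_sum_of_subset_of_nonneg ?_ fun i _ _ =>
      mul_nonneg (pow_nonneg hd0.le _) (hδ0 i ω)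
    exact Finset.Icc_subset_Icc le_rfl hjt
  intro t ht
  set S := (Finset.Icc 1 t).filter (· ∈ H0) with hS
  -- pointwise inequality
  have hpt : ∀ j ∈ S, ∀ ω,
      d ^ (t - j) * δ j ω / max (Rd t ω) 1 ≤
        alv j ω / (d * Rd (j-1) ω + 1) * e j ω := by
    intro j hj ω
    obtain ⟨hj1, hjt⟩ := Finset.mem_Icc.mp (Finset.mem_filter.mp hj).1
    have hM0 : (0:ℝ) < max (Rd t ω) 1 := lt_of_lt_of_le one_pos (le_max_right _ _)
    by_cases hc : 1 / alv j ω ≤ e j ω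
    · have hδ1 : δ j ω = 1 := by rw [hδ, if_pos hc]
      have ha0 := (halv j ω).1
      have h1 : (1:ℝ) ≤ alv j ω * e j ω := by
        rw [div_le_iff₀ ha0] at hc
        linarith [hc]
      -- Rd j ω = 1 + d * Rd (j-1) ω
      have hRj : Rd j ω = d * Rd (j-1) ω + 1 := by
        obtain ⟨k, rfl⟩ : ∃ k, j = k + 1 := ⟨j - 1, by omega⟩
        rw [hrec k ω] at *
        rw [hδ1]
        simp only [Nat.add_sub_cancel]
        ring
      have hkey : d ^ (t - j) * (d * Rd (j-1) ω + 1) ≤ max (Rd t ω) 1 := by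
        rw [← hRj]
        exact le_trans (hdom j t ω hjt) (le_max_left _ _)
      rw [hδ1, mul_one,
        show alv j ω / (d * Rd (j-1) ω + 1) * e j ω
          = alv j ω * e j ω / (d * Rd (j-1) ω + 1) from by ring,
        div_le_div_iff₀ hM0 (hD0 _ ω)]
      nlinarith [hkey, h1, hM0]
    · have hδz : δ j ω = 0 := by rw [hδ, if_neg hc]
      rw [hδz, mul_zero, zero_div]
      exact mul_nonneg (hg0 j ω) (he_nonneg j ω)
  -- integrability of g j * e j
  have hge_int : ∀ j, 1 ≤ j →
      Integrable (fun ω => alv j ω / (d * Rd (j-1) ω + 1) * e j ω) μ := by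
    intro j hj
    refine (he_int j).bdd_mul (c := 1) ((hg_meas j hj).mono (ℱ.le _) le_rfl).aestronglyMeasurable
      (ae_of_all _ fun x => ?_)
    rw [Real.norm_eq_abs, abs_of_nonneg (hg0 j x)]; exact hg1 j x
  have hGint : Integrable (fun ω => ∑ j ∈ S, alv j ω / (d * Rd (j-1) ω + 1) * e j ω) μ := by
    refine integrable_finset_sum _ fun j hj => ?_
    exact hge_int j (hH0 j (Finset.mem_filter.mp hj).2)
  -- step 1 : integral mono
  have step1 : ∫ ω, (∑ j ∈ S, d ^ (t - j) * δ j ω) / max (Rd t ω) 1 ∂μ ≤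
      ∫ ω, ∑ j ∈ S, alv j ω / (d * Rd (j-1) ω + 1) * e j ω ∂μ := by
    refine integral_mono_of_nonneg (ae_of_all _ fun ω => ?_) hGint (ae_of_all _ fun ω => ?_)
    · have hM0 : (0:ℝ) < max (Rd t ω) 1 := lt_of_lt_of_le one_pos (le_max_right _ _)
      exact div_nonneg (Finset.sum_nonneg fun j _ =>
        mul_nonneg (pow_nonneg hd0.le _) (hδ0 j ω)) hM0.le
    · dsimp only
      rw [Finset.sum_div]
      exact Finset.sum_le_sum fun j hj => hpt j hj ω
  -- step 2+3 : per-term conditional expectation bound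
  have step2 : ∫ ω, ∑ j ∈ S, alv j ω / (d * Rd (j-1) ω + 1) * e j ω ∂μ ≤
      ∫ ω, ∑ j ∈ S, alv j ω / (d * Rd (j-1) ω + 1) ∂μ := by
    rw [integral_finset_sum _ fun j hj => hge_int j (hH0 j (Finset.mem_filter.mp hj).2),
      integral_finset_sum]
    · refine Finset.sum_le_sum fun j hj => ?_
      have hjH0 : j ∈ H0 := (Finset.mem_filter.mp hj).2
      exact integral_mul_le_of_condexp_le_one (ℱ.le _) (he_int j)
        ((hg_meas j (hH0 j hjH0)).stronglyMeasurable) (hg0 j) (hg1 j) (hvalid j hjH0)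
    · intro j hj
      have hj1 := hH0 j (Finset.mem_filter.mp hj).2
      refine (integrable_const (1:ℝ)).bdd_mul (c := 1)
        ((hg_meas j hj1).mono (ℱ.le _) le_rfl).aestronglyMeasurable (ae_of_all _ fun x => ?_) |>.congr ?_
      · rw [Real.norm_eq_abs, abs_of_nonneg (hg0 j x)]; exact hg1 j x
      · exact ae_of_all _ fun ω => by simp
  exact le_trans step1 (le_trans step2 (hFDPstar t ht))
end

section
/- Suppose the e-values are conditionally valid, i.e. E[e_j | F_{j-1}] ≤ 1 almost surely for every j ∈ H_0. If the testing levels satisfy, almost surely, ∑_{j=1}^t α_j/(d·R^d_{j-1} + 1) ≤ α for every t ≥ 1, then mem-FDR(t) ≤ α for every t ≥ 1. -/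
open MeasureTheory

theorem mem_eLORD_memFDR_control
    {Ω : Type*} {m0 : MeasurableSpace Ω} {μ : Measure Ω} [IsProbabilityMeasure μ]
    (ℱ : Filtration ℕ m0) (hF0 : ℱ 0 = ⊥)
    (e : ℕ → Ω → ℝ) (he_nonneg : ∀ t ω, 0 ≤ e t ω)
    (he_int : ∀ t, Integrable (e t) μ)
    (alv : ℕ → Ω → ℝ) (halv : ∀ t ω, alv t ω ∈ Set.Ioo (0:ℝ) 1)
    (halv_meas : ∀ t, 1 ≤ t → Measurable[ℱ (t-1)] (alv t))
    (δ : ℕ → Ω → ℝ)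
    (hδ : ∀ t ω, δ t ω = if 1 / alv t ω ≤ e t ω then 1 else 0)
    (hδ_meas : ∀ t, Measurable[ℱ t] (δ t))
    (H0 : Set ℕ) [DecidablePred (· ∈ H0)] (hH0 : ∀ j ∈ H0, 1 ≤ j)
    (d : ℝ) (hd : d ∈ Set.Ioc (0:ℝ) 1)
    (Rd : ℕ → Ω → ℝ) (hRd : ∀ t ω, Rd t ω = ∑ j ∈ Finset.Icc 1 t, d ^ (t - j) * δ j ω)
    (α : ℝ) (hα : α ∈ Set.Ioo (0:ℝ) 1)
    (hvalid : ∀ j ∈ H0, μ[e j | ℱ (j-1)] ≤ᵐ[μ] fun _ => 1)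
    (hlevels : ∀ᵐ ω ∂μ, ∀ t, 1 ≤ t → (∑ j ∈ Finset.Icc 1 t, alv j ω / (d * Rd (j-1) ω + 1)) ≤ α)
    :
    ∀ t, 1 ≤ t → ∫ ω, (∑ j ∈ (Finset.Icc 1 t).filter (· ∈ H0), d ^ (t - j) * δ j ω) / max (Rd t ω) 1 ∂μ ≤ α := by
  have hd0 : 0 < d := hd.1
  have hδ01 : ∀ j ω, δ j ω = 0 ∨ δ j ω = 1 := by
    intro j ω; rw [hδ]; split <;> simp
  have hδnn : ∀ j ω, 0 ≤ δ j ω := by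
    intro j ω; rcases hδ01 j ω with h | h <;> rw [h] <;> norm_num
  have hRnn : ∀ n ω, 0 ≤ Rd n ω := by
    intro n ω; rw [hRd]
    exact Finset.sum_nonneg fun i _ => mul_nonneg (pow_nonneg hd0.le _) (hδnn i ω)
  have hden_pos : ∀ n ω, 0 < d * Rd n ω + 1 := by
    intro n ω; have := hRnn n ω; nlinarith
  have hden_ge1 : ∀ n ω, 1 ≤ d * Rd n ω + 1 := by
    intro n ω; have := hRnn n ω; nlinarith
  -- measurability of Rd
  have hRmeas : ∀ n, Measurable[ℱ n] (Rd n) := by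
    intro n
    have h : Rd n = fun ω => ∑ j ∈ Finset.Icc 1 n, d ^ (n - j) * δ j ω :=
      funext fun ω => hRd n ω
    rw [h]
    exact Finset.measurable_sum _ fun j hj =>
      measurable_const.mul ((hδ_meas j).mono (ℱ.mono (Finset.mem_Icc.mp hj).2) le_rfl)
  -- recursion Rd j = d * Rd (j-1) + δ j
  have hRrec : ∀ j, 1 ≤ j → ∀ ω, Rd j ω = d * Rd (j - 1) ω + δ j ω := by
    intro j hj ω
    obtain ⟨n, rfl⟩ : ∃ n, j = n + 1 := ⟨j - 1, by omega⟩
    rw [hRd, hRd]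
    simp only [Nat.add_sub_cancel]
    rw [Finset.sum_Icc_succ_top (by omega : 1 ≤ n + 1), Finset.mul_sum]
    simp only [Nat.sub_self, pow_zero, one_mul]
    congr 1
    refine Finset.sum_congr rfl fun i hi => ?_
    have hi' : i ≤ n := (Finset.mem_Icc.mp hi).2
    have hexp : n + 1 - i = (n - i) + 1 := by omega
    rw [hexp, pow_succ]; ring
  -- Rd t ≥ d^(t-j) * Rd j
  have hRge : ∀ j t, j ≤ t → ∀ ω, d ^ (t - j) * Rd j ω ≤ Rd t ω := by
    intro j t hjt ω
    rw [hRd t, hRd j, Finset.mul_sum]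
    calc ∑ i ∈ Finset.Icc 1 j, d ^ (t - j) * (d ^ (j - i) * δ i ω)
        = ∑ i ∈ Finset.Icc 1 j, d ^ (t - i) * δ i ω := by
          refine Finset.sum_congr rfl fun i hi => ?_
          have hi' := Finset.mem_Icc.mp hi
          have hexp : t - i = (t - j) + (j - i) := by omega
          rw [hexp, pow_add]; ring
      _ ≤ ∑ i ∈ Finset.Icc 1 t, d ^ (t - i) * δ i ω :=
          Finset.sum_le_sum_of_subset_of_nonneg (Finset.Icc_subset_Icc le_rfl hjt)
            fun i _ _ => mul_nonneg (pow_nonneg hd0.le _) (hδnn i ω)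
  -- δ j ≤ alv j * e j
  have hδle : ∀ j ω, δ j ω ≤ alv j ω * e j ω := by
    intro j ω; rw [hδ]
    split
    · rename_i h
      have ha := (halv j ω).1
      calc (1:ℝ) = alv j ω * (1 / alv j ω) := by field_simp
        _ ≤ alv j ω * e j ω := mul_le_mul_of_nonneg_left h ha.le
    · exact mul_nonneg (halv j ω).1.le (he_nonneg j ω)
  -- the G functions
  set G : ℕ → Ω → ℝ := fun j ω => alv j ω / (d * Rd (j - 1) ω + 1) with hG
  have hGnn : ∀ j ω, 0 ≤ G j ω := fun j ω =>
    div_nonneg (halv j ω).1.le (hden_pos _ ω).le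
  have hGle1 : ∀ j ω, G j ω ≤ 1 := by
    intro j ω
    rw [hG]
    rw [div_le_one (hden_pos _ ω)]
    have := (halv j ω).2
    have := hden_ge1 (j - 1) ω
    linarith
  have hGmeasF : ∀ j, 1 ≤ j → Measurable[ℱ (j - 1)] (G j) := by
    intro j hj
    exact (halv_meas j hj).div ((measurable_const.mul (hRmeas (j - 1))).add measurable_const)
  have hGmeas0 : ∀ j, 1 ≤ j → Measurable (G j) := fun j hj =>
    (hGmeasF j hj).mono (ℱ.le _) le_rfl
  have hGint : ∀ j, 1 ≤ j → Integrable (G j) μ := by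
    intro j hj
    refine Integrable.mono' (integrable_const 1) (hGmeas0 j hj).aestronglyMeasurable
      (Filter.Eventually.of_forall fun ω => ?_)
    rw [Real.norm_eq_abs, abs_of_nonneg (hGnn j ω)]
    exact hGle1 j ω
  have hGe_int : ∀ j, 1 ≤ j → Integrable (fun ω => G j ω * e j ω) μ := by
    intro j hj
    refine (he_int j).bdd_mul (hGmeas0 j hj).aestronglyMeasurable (c := 1) (Filter.Eventually.of_forall fun ω => ?_)
    rw [Real.norm_eq_abs, abs_of_nonneg (hGnn j ω)]
    exact hGle1 j ω
  -- conditional expectation step : ∫ G j * e j ≤ ∫ G j for j ∈ H0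
  have hcond : ∀ j ∈ H0, ∫ ω, G j ω * e j ω ∂μ ≤ ∫ ω, G j ω ∂μ := by
    intro j hj
    have hj1 : 1 ≤ j := hH0 j hj
    have hm : ℱ (j - 1) ≤ m0 := ℱ.le _
    have hpull : μ[(fun ω => G j ω * e j ω)|ℱ (j - 1)] =ᵐ[μ]
        fun ω => G j ω * (μ[e j|ℱ (j - 1)]) ω := by
      have := condExp_mul_of_stronglyMeasurable_left (μ := μ) (m := ℱ (j - 1))
        (hGmeasF j hj1).stronglyMeasurable (hGe_int j hj1) (he_int j)
      exact this
    calc ∫ ω, G j ω * e j ω ∂μ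
        = ∫ ω, (μ[(fun ω => G j ω * e j ω)|ℱ (j - 1)]) ω ∂μ :=
          (integral_condExp hm).symm
      _ = ∫ ω, G j ω * (μ[e j|ℱ (j - 1)]) ω ∂μ := integral_congr_ae hpull
      _ ≤ ∫ ω, G j ω ∂μ := by
          refine integral_mono_ae ?_ (hGint j hj1) ?_
          · exact (integrable_condExp).bdd_mul (hGmeas0 j hj1).aestronglyMeasurable
              (c := 1) (Filter.Eventually.of_forall fun ω => by
                rw [Real.norm_eq_abs, abs_of_nonneg (hGnn j ω)]; exact hGle1 j ω)
          · filter_upwards [hvalid j hj] with ω hω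
            calc G j ω * (μ[e j|ℱ (j - 1)]) ω ≤ G j ω * 1 :=
                  mul_le_mul_of_nonneg_left hω (hGnn j ω)
              _ = G j ω := mul_one _
  -- main chain
  intro t ht
  set S := (Finset.Icc 1 t).filter (· ∈ H0) with hS
  have hSmem : ∀ j ∈ S, 1 ≤ j ∧ j ≤ t ∧ j ∈ H0 := by
    intro j hj
    have := Finset.mem_filter.mp hj
    have h2 := Finset.mem_Icc.mp this.1
    exact ⟨h2.1, h2.2, this.2⟩
  -- pointwise bound
  have hpt : ∀ ω, (∑ j ∈ S, d ^ (t - j) * δ j ω) / max (Rd t ω) 1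
      ≤ ∑ j ∈ S, G j ω * e j ω := by
    intro ω
    rw [Finset.sum_div]
    refine Finset.sum_le_sum fun j hj => ?_
    obtain ⟨hj1, hjt, hjH⟩ := hSmem j hj
    have hM1 : (1:ℝ) ≤ max (Rd t ω) 1 := le_max_right _ _
    have hM0 : (0:ℝ) < max (Rd t ω) 1 := lt_of_lt_of_le one_pos hM1
    have step1 : d ^ (t - j) * δ j ω / max (Rd t ω) 1 ≤ δ j ω / (d * Rd (j - 1) ω + 1) := by
      rcases hδ01 j ω with h0 | h1
      · rw [h0]; simp
      · rw [h1, mul_one]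
        rw [div_le_div_iff₀ hM0 (hden_pos _ ω)]
        have hrec := hRrec j hj1 ω
        rw [h1] at hrec
        calc d ^ (t - j) * (d * Rd (j - 1) ω + 1) = d ^ (t - j) * Rd j ω := by rw [hrec]
          _ ≤ Rd t ω := hRge j t hjt ω
          _ ≤ max (Rd t ω) 1 := le_max_left _ _
          _ = 1 * max (Rd t ω) 1 := (one_mul _).symm
    have step2 : δ j ω / (d * Rd (j - 1) ω + 1) ≤ G j ω * e j ω := by
      rw [hG]
      rw [div_mul_eq_mul_div]
      gcongr
      exacts [(hden_pos _ ω).le, hδle j ω]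
    exact step1.trans step2
  -- integrability of LHS
  have hFmeas : Measurable fun ω => (∑ j ∈ S, d ^ (t - j) * δ j ω) / max (Rd t ω) 1 := by
    have h1 : Measurable fun ω => ∑ j ∈ S, d ^ (t - j) * δ j ω :=
      Finset.measurable_sum _ fun j hj =>
        measurable_const.mul ((hδ_meas j).mono (ℱ.le j) le_rfl)
    have h2 : Measurable fun ω => max (Rd t ω) 1 :=
      ((hRmeas t).mono (ℱ.le t) le_rfl).max measurable_const
    exact h1.div h2
  have hFnn : ∀ ω, 0 ≤ (∑ j ∈ S, d ^ (t - j) * δ j ω) / max (Rd t ω) 1 := by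
    intro ω
    refine div_nonneg (Finset.sum_nonneg fun j _ =>
      mul_nonneg (pow_nonneg hd0.le _) (hδnn j ω)) (le_trans one_pos.le (le_max_right _ _))
  have hFint : Integrable (fun ω => (∑ j ∈ S, d ^ (t - j) * δ j ω) / max (Rd t ω) 1) μ := by
    refine Integrable.mono' (integrable_const (t : ℝ)) hFmeas.aestronglyMeasurable
      (Filter.Eventually.of_forall fun ω => ?_)
    rw [Real.norm_eq_abs, abs_of_nonneg (hFnn ω)]
    have hM1 : (1:ℝ) ≤ max (Rd t ω) 1 := le_max_right _ _
    have hnum : (∑ j ∈ S, d ^ (t - j) * δ j ω) ≤ (t : ℝ) := by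
      calc ∑ j ∈ S, d ^ (t - j) * δ j ω ≤ ∑ _j ∈ S, (1:ℝ) := by
            refine Finset.sum_le_sum fun j _ => ?_
            have h1 : d ^ (t - j) ≤ 1 := pow_le_one₀ hd0.le hd.2
            rcases hδ01 j ω with h | h <;> rw [h] <;> nlinarith [pow_nonneg hd0.le (t - j)]
        _ = (S.card : ℝ) := by simp
        _ ≤ (t : ℝ) := by
            have : S.card ≤ (Finset.Icc 1 t).card := Finset.card_filter_le _ _
            have h2 : (Finset.Icc 1 t).card = t := by rw [Nat.card_Icc]; omega
            exact_mod_cast this.trans_eq h2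
    calc (∑ j ∈ S, d ^ (t - j) * δ j ω) / max (Rd t ω) 1
        ≤ (∑ j ∈ S, d ^ (t - j) * δ j ω) / 1 := by
          apply div_le_div_of_nonneg_left _ one_pos hM1
          exact Finset.sum_nonneg fun j _ => mul_nonneg (pow_nonneg hd0.le _) (hδnn j ω)
      _ = ∑ j ∈ S, d ^ (t - j) * δ j ω := div_one _
      _ ≤ (t : ℝ) := hnum
  have hSint : Integrable (fun ω => ∑ j ∈ S, G j ω * e j ω) μ :=
    integrable_finset_sum S fun j hj => hGe_int j (hSmem j hj).1
  calc ∫ ω, (∑ j ∈ S, d ^ (t - j) * δ j ω) / max (Rd t ω) 1 ∂μ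
      ≤ ∫ ω, ∑ j ∈ S, G j ω * e j ω ∂μ :=
        integral_mono hFint hSint hpt
    _ = ∑ j ∈ S, ∫ ω, G j ω * e j ω ∂μ :=
        integral_finset_sum S fun j hj => hGe_int j (hSmem j hj).1
    _ ≤ ∑ j ∈ S, ∫ ω, G j ω ∂μ :=
        Finset.sum_le_sum fun j hj => hcond j (hSmem j hj).2.2
    _ = ∫ ω, ∑ j ∈ S, G j ω ∂μ :=
        (integral_finset_sum S fun j hj => hGint j (hSmem j hj).1).symm
    _ ≤ ∫ ω, ∑ j ∈ Finset.Icc 1 t, G j ω ∂μ := by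
        refine integral_mono (integrable_finset_sum S fun j hj => hGint j (hSmem j hj).1)
          (integrable_finset_sum _ fun j hj => hGint j (Finset.mem_Icc.mp hj).1) fun ω => ?_
        exact Finset.sum_le_sum_of_subset_of_nonneg (Finset.filter_subset _ _)
          fun j _ _ => hGnn j ω
    _ ≤ α := by
        have hlev : ∀ᵐ ω ∂μ, (∑ j ∈ Finset.Icc 1 t, G j ω) ≤ α := by
          filter_upwards [hlevels] with ω hω
          exact hω t ht
        calc ∫ ω, ∑ j ∈ Finset.Icc 1 t, G j ω ∂μ ≤ ∫ _ω, α ∂μ :=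
              integral_mono_ae (integrable_finset_sum _ fun j hj =>
                hGint j (Finset.mem_Icc.mp hj).1) (integrable_const α) hlev
          _ = α := by simp
end

section
/- Suppose the e-values are conditionally valid, i.e. E[e_j | F_{j-1}] ≤ 1 almost surely for every j ∈ H_0. If the testing levels satisfy, almost surely, ∑_{j=1}^t (α_j/(d·R^d_{j-1} + 1)) · 1{e_j < 1/λ_j}/(1−λ_j) ≤ α for every t ≥ 1, then (i) E[∑_{j=1}^t (α_j/(d·R^d_{j-1} + 1)) · 1{e_j < 1/λ_j}/(1−λ_j)] ≥ E[∑_{j∈H_0(t)} α_j/(d·R^d_{j-1} + 1)] for every t ≥ 1, and (ii) mem-FDR(t) ≤ α for every t ≥ 1. -/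
open MeasureTheory Filter

lemma aux_int_mul_le {Ω : Type*} {m m0 : MeasurableSpace Ω} {μ : Measure Ω}
    [IsFiniteMeasure μ] (hm : m ≤ m0) {f g : Ω → ℝ}
    (hg : StronglyMeasurable[m] g) (hg0 : ∀ ω, 0 ≤ g ω)
    (hgint : Integrable g μ) (hf : Integrable f μ)
    (hgf : Integrable (g * f) μ) (hval : μ[f|m] ≤ᵐ[μ] fun _ => 1) :
    ∫ ω, g ω * f ω ∂μ ≤ ∫ ω, g ω ∂μ := by
  have h1 : μ[g * f|m] =ᵐ[μ] g * μ[f|m] := condExp_mul_of_stronglyMeasurable_left hg hgf hf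
  calc ∫ ω, g ω * f ω ∂μ = ∫ ω, (μ[g * f|m]) ω ∂μ := (integral_condExp hm).symm
    _ = ∫ ω, (g * μ[f|m]) ω ∂μ := integral_congr_ae h1
    _ ≤ ∫ ω, g ω ∂μ := by
        refine integral_mono_ae (integrable_condExp.congr h1) hgint ?_
        filter_upwards [hval] with ω hω
        simpa using mul_le_of_le_one_right (hg0 ω) hω

lemma aux_int_le_mul {Ω : Type*} {m m0 : MeasurableSpace Ω} {μ : Measure Ω}
    [IsFiniteMeasure μ] (hm : m ≤ m0) {g h b : Ω → ℝ}
    (hg : StronglyMeasurable[m] g) (hg0 : ∀ ω, 0 ≤ g ω)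
    (hh : Integrable h μ) (hgh : Integrable (g * h) μ)
    (hgb : Integrable (fun ω => g ω * b ω) μ)
    (hb : ∀ᵐ ω ∂μ, b ω ≤ (μ[h|m]) ω) :
    ∫ ω, g ω * b ω ∂μ ≤ ∫ ω, g ω * h ω ∂μ := by
  have h1 : μ[g * h|m] =ᵐ[μ] g * μ[h|m] := condExp_mul_of_stronglyMeasurable_left hg hgh hh
  calc ∫ ω, g ω * b ω ∂μ ≤ ∫ ω, (g * μ[h|m]) ω ∂μ := by
        refine integral_mono_ae hgb (integrable_condExp.congr h1) ?_
        filter_upwards [hb] with ω hω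
        exact mul_le_mul_of_nonneg_left hω (hg0 ω)
    _ = ∫ ω, (μ[g * h|m]) ω ∂μ := (integral_congr_ae h1).symm
    _ = ∫ ω, g ω * h ω ∂μ := integral_condExp hm

lemma aux_markov {Ω : Type*} {m m0 : MeasurableSpace Ω} {μ : Measure Ω}
    [IsProbabilityMeasure μ] (hm : m ≤ m0) {e lam : Ω → ℝ}
    (he0 : ∀ ω, 0 ≤ e ω) (he : Integrable e μ)
    (hlam : ∀ ω, lam ω ∈ Set.Ioo (0:ℝ) 1) (hlamm : StronglyMeasurable[m] lam)
    (hI : Integrable (fun ω => if e ω < 1 / lam ω then (1:ℝ) else 0) μ)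
    (hval : μ[e|m] ≤ᵐ[μ] fun _ => 1) :
    ∀ᵐ ω ∂μ, 1 - lam ω ≤ (μ[fun ω' => if e ω' < 1 / lam ω' then (1:ℝ) else 0|m]) ω := by
  set I : Ω → ℝ := fun ω => if e ω < 1 / lam ω then (1:ℝ) else 0 with hIdef
  set J : Ω → ℝ := fun ω => if e ω < 1 / lam ω then (0:ℝ) else 1 with hJdef
  have hJ : Integrable J μ := by
    have : J = (fun _ => (1:ℝ)) - I := by funext ω; simp only [hIdef, hJdef, Pi.sub_apply]; split_ifs <;> ring
    rw [this]; exact (integrable_const 1).sub hI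
  have hJle : ∀ ω, J ω ≤ lam ω * e ω := by
    intro ω
    by_cases h : e ω < 1 / lam ω
    · simp only [hJdef, if_pos h]
      exact mul_nonneg (hlam ω).1.le (he0 ω)
    · simp only [hJdef, if_neg h]
      push_neg at h
      rw [div_le_iff₀ (hlam ω).1] at h
      linarith [h]
  have hle : Integrable (lam * e) μ := by
    refine he.mono' (((hlamm.mono hm).aestronglyMeasurable).mul he.1) ?_
    refine Eventually.of_forall fun ω => ?_
    have h1 : |lam ω * e ω| = lam ω * e ω := abs_of_nonneg (mul_nonneg (hlam ω).1.le (he0 ω))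
    simp only [Pi.mul_apply, Real.norm_eq_abs, h1]
    exact mul_le_of_le_one_left (he0 ω) (hlam ω).2.le
  have hJm : μ[J|m] ≤ᵐ[μ] μ[lam * e|m] := condExp_mono hJ hle (Eventually.of_forall hJle)
  have hpull : μ[lam * e|m] =ᵐ[μ] lam * μ[e|m] := condExp_mul_of_stronglyMeasurable_left hlamm hle he
  have hJlam : μ[J|m] ≤ᵐ[μ] lam := by
    filter_upwards [hJm, hpull, hval] with ω h1 h2 h3
    calc (μ[J|m]) ω ≤ (μ[lam * e|m]) ω := h1
      _ = lam ω * (μ[e|m]) ω := h2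
      _ ≤ lam ω * 1 := mul_le_mul_of_nonneg_left h3 (hlam ω).1.le
      _ = lam ω := mul_one _
  have hIJ : I = (fun _ => (1:ℝ)) - J := by
    funext ω; simp only [hIdef, hJdef, Pi.sub_apply]; split_ifs <;> ring
  have hcond : μ[I|m] =ᵐ[μ] (fun _ => (1:ℝ)) - μ[J|m] := by
    rw [hIJ]
    have h := condExp_sub (μ := μ) (m := m) (integrable_const (1:ℝ)) hJ
    rw [condExp_const hm (1:ℝ)] at h
    exact h
  filter_upwards [hcond, hJlam] with ω h1 h2
  rw [h1]
  simp only [Pi.sub_apply]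
  linarith

theorem mem_eSAFFRON_memFDR_control
    {Ω : Type*} {m0 : MeasurableSpace Ω} {μ : Measure Ω} [IsProbabilityMeasure μ]
    (ℱ : Filtration ℕ m0) (hF0 : ℱ 0 = ⊥)
    (e : ℕ → Ω → ℝ) (he_nonneg : ∀ t ω, 0 ≤ e t ω)
    (he_int : ∀ t, Integrable (e t) μ)
    (alv : ℕ → Ω → ℝ) (halv : ∀ t ω, alv t ω ∈ Set.Ioo (0:ℝ) 1)
    (halv_meas : ∀ t, 1 ≤ t → Measurable[ℱ (t-1)] (alv t))
    (δ : ℕ → Ω → ℝ)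
    (hδ : ∀ t ω, δ t ω = if 1 / alv t ω ≤ e t ω then 1 else 0)
    (hδ_meas : ∀ t, Measurable[ℱ t] (δ t))
    (H0 : Set ℕ) [DecidablePred (· ∈ H0)] (hH0 : ∀ j ∈ H0, 1 ≤ j)
    (d : ℝ) (hd : d ∈ Set.Ioc (0:ℝ) 1)
    (Rd : ℕ → Ω → ℝ) (hRd : ∀ t ω, Rd t ω = ∑ j ∈ Finset.Icc 1 t, d ^ (t - j) * δ j ω)
    (lam : ℕ → Ω → ℝ) (hlam : ∀ t ω, lam t ω ∈ Set.Ioo (0:ℝ) 1)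
    (hlam_meas : ∀ t, 1 ≤ t → Measurable[ℱ (t-1)] (lam t))
    (α : ℝ) (hα : α ∈ Set.Ioo (0:ℝ) 1)
    (hvalid : ∀ j ∈ H0, μ[e j | ℱ (j-1)] ≤ᵐ[μ] fun _ => 1)
    (hlevels : ∀ᵐ ω ∂μ, ∀ t, 1 ≤ t → (∑ j ∈ Finset.Icc 1 t,
        alv j ω / (d * Rd (j-1) ω + 1) * (if e j ω < 1 / lam j ω then 1 else 0) / (1 - lam j ω)) ≤ α)
    :
    (∀ t, 1 ≤ t →
      ∫ ω, ∑ j ∈ (Finset.Icc 1 t).filter (· ∈ H0), alv j ω / (d * Rd (j-1) ω + 1) ∂μ ≤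
        ∫ ω, (∑ j ∈ Finset.Icc 1 t,
        alv j ω / (d * Rd (j-1) ω + 1) * (if e j ω < 1 / lam j ω then 1 else 0) / (1 - lam j ω)) ∂μ) ∧
    (∀ t, 1 ≤ t → ∫ ω, (∑ j ∈ (Finset.Icc 1 t).filter (· ∈ H0), d ^ (t - j) * δ j ω) / max (Rd t ω) 1 ∂μ ≤ α) := by
  classical
  have hm : ∀ k : ℕ, ℱ k ≤ m0 := fun k => ℱ.le k
  have hδ01 : ∀ j ω, δ j ω = 0 ∨ δ j ω = 1 := by
    intro j ω; rw [hδ]; split_ifs <;> simp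
  have hδ0 : ∀ j ω, 0 ≤ δ j ω := by
    intro j ω; rcases hδ01 j ω with h | h <;> rw [h] <;> norm_num
  have hRd0 : ∀ k ω, 0 ≤ Rd k ω := by
    intro k ω; rw [hRd]
    exact Finset.sum_nonneg fun i _ => mul_nonneg (pow_nonneg hd.1.le _) (hδ0 i ω)
  have hden : ∀ k ω, (1:ℝ) ≤ d * Rd k ω + 1 :=
    fun k ω => le_add_of_nonneg_left (mul_nonneg hd.1.le (hRd0 k ω))
  have hdenpos : ∀ k ω, (0:ℝ) < d * Rd k ω + 1 := fun k ω => lt_of_lt_of_le one_pos (hden k ω)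
  have hc0 : ∀ j ω, 0 ≤ alv j ω / (d * Rd (j-1) ω + 1) :=
    fun j ω => div_nonneg (halv j ω).1.le (hdenpos _ ω).le
  have hc1 : ∀ j ω, alv j ω / (d * Rd (j-1) ω + 1) ≤ 1 :=
    fun j ω => div_le_one_of_le₀ (le_trans (halv j ω).2.le (hden _ ω)) (hdenpos _ ω).le
  have hδm0 : ∀ j, Measurable (δ j) := fun j => (hδ_meas j).mono (hm j) le_rfl
  have hRdmeas : ∀ k, Measurable[ℱ k] (Rd k) := by
    intro k
    have h2 : Rd k = fun ω => ∑ j ∈ Finset.Icc 1 k, d ^ (k - j) * δ j ω := funext (hRd k)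
    rw [h2]
    exact Finset.measurable_sum _ fun j hj =>
      ((hδ_meas j).mono (ℱ.mono (Finset.mem_Icc.mp hj).2) le_rfl).const_mul _
  have hRdm0 : ∀ k, Measurable (Rd k) := fun k => (hRdmeas k).mono (hm k) le_rfl
  have hcmeas : ∀ j, 1 ≤ j → Measurable[ℱ (j-1)] (fun ω => alv j ω / (d * Rd (j-1) ω + 1)) :=
    fun j hj => (halv_meas j hj).div (((hRdmeas (j-1)).const_mul d).add_const 1)
  have hlamm0 : ∀ j, 1 ≤ j → Measurable (lam j) := fun j hj => (hlam_meas j hj).mono (hm _) le_rfl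
  -- recursion for Rd
  have hrec : ∀ j, 1 ≤ j → ∀ ω, Rd j ω = d * Rd (j-1) ω + δ j ω := by
    intro j hj ω
    rw [hRd j, hRd (j-1), Finset.mul_sum]
    have hins : Finset.Icc 1 j = insert j (Finset.Icc 1 (j-1)) := by
      ext i; simp only [Finset.mem_Icc, Finset.mem_insert]; omega
    rw [hins, Finset.sum_insert (by simp only [Finset.mem_Icc]; omega)]
    rw [Nat.sub_self, pow_zero, one_mul]
    have hcg : ∀ i ∈ Finset.Icc 1 (j-1), d ^ (j - i) * δ i ω = d * (d ^ (j-1-i) * δ i ω) := by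
      intro i hi
      rw [Finset.mem_Icc] at hi
      have h3 : j - i = (j - 1 - i) + 1 := by omega
      rw [h3, pow_succ]; ring
    rw [Finset.sum_congr rfl hcg]
    ring
  -- chain bound
  have hchain : ∀ t j ω, 1 ≤ j → j ≤ t →
      d ^ (t - j) * (d * Rd (j-1) ω + δ j ω) ≤ Rd t ω := by
    intro t j ω hj hjt
    rw [← hrec j hj ω, hRd t, hRd j, Finset.mul_sum]
    calc ∑ i ∈ Finset.Icc 1 j, d ^ (t - j) * (d ^ (j - i) * δ i ω)
        = ∑ i ∈ Finset.Icc 1 j, d ^ (t - i) * δ i ω := by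
          refine Finset.sum_congr rfl fun i hi => ?_
          rw [Finset.mem_Icc] at hi
          have h3 : t - i = (t - j) + (j - i) := by omega
          rw [h3, pow_add]; ring
      _ ≤ ∑ i ∈ Finset.Icc 1 t, d ^ (t - i) * δ i ω := by
          refine Finset.sum_le_sum_of_subset_of_nonneg (Finset.Icc_subset_Icc_right hjt)
            fun i _ _ => mul_nonneg (pow_nonneg hd.1.le _) (hδ0 i ω)
  -- integrability of the indicator
  have hIint : ∀ j, 1 ≤ j → Integrable (fun ω => if e j ω < 1 / lam j ω then (1:ℝ) else 0) μ := by
    intro j hj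
    obtain ⟨e', he'm, he'ae⟩ := (he_int j).aemeasurable
    have hmeas : Measurable fun ω => if e' ω < 1 / lam j ω then (1:ℝ) else 0 :=
      Measurable.ite (measurableSet_lt he'm (measurable_const.div (hlamm0 j hj)))
        measurable_const measurable_const
    have hae : (fun ω => if e' ω < 1 / lam j ω then (1:ℝ) else 0)
        =ᵐ[μ] fun ω => if e j ω < 1 / lam j ω then (1:ℝ) else 0 := by
      filter_upwards [he'ae] with ω hω; rw [hω]
    have hint : Integrable (fun ω => if e' ω < 1 / lam j ω then (1:ℝ) else 0) μ := by
      refine (integrable_const (1:ℝ)).mono' hmeas.aestronglyMeasurable ?_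
      refine Eventually.of_forall fun ω => ?_
      rw [Real.norm_eq_abs]
      split_ifs <;> norm_num
    exact hint.congr hae
  -- nonnegativity and boundedness of the terms
  have hterm_nonneg : ∀ j ω, 0 ≤ alv j ω / (d * Rd (j-1) ω + 1) *
      (if e j ω < 1 / lam j ω then 1 else 0) / (1 - lam j ω) := by
    intro j ω
    have h1 : (0:ℝ) ≤ if e j ω < 1 / lam j ω then 1 else 0 := by positivity
    have h2 : (0:ℝ) < 1 - lam j ω := by linarith [(hlam j ω).2]
    exact div_nonneg (mul_nonneg (hc0 j ω) h1) h2.le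
  have hterm_bound : ∀ j, 1 ≤ j → ∀ᵐ ω ∂μ, alv j ω / (d * Rd (j-1) ω + 1) *
      (if e j ω < 1 / lam j ω then 1 else 0) / (1 - lam j ω) ≤ α := by
    intro j hj
    filter_upwards [hlevels] with ω hω
    refine le_trans ?_ (hω j hj)
    exact Finset.single_le_sum (f := fun i => alv i ω / (d * Rd (i-1) ω + 1) *
      (if e i ω < 1 / lam i ω then 1 else 0) / (1 - lam i ω))
      (fun i _ => hterm_nonneg i ω) (Finset.mem_Icc.mpr ⟨hj, le_rfl⟩)
  have hterm_int : ∀ j, 1 ≤ j → Integrable (fun ω => alv j ω / (d * Rd (j-1) ω + 1) *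
      (if e j ω < 1 / lam j ω then 1 else 0) / (1 - lam j ω)) μ := by
    intro j hj
    have hmeasg : Measurable fun ω => alv j ω / (d * Rd (j-1) ω + 1) / (1 - lam j ω) :=
      ((hcmeas j hj).mono (hm _) le_rfl).div (measurable_const.sub (hlamm0 j hj))
    have haesm : AEStronglyMeasurable (fun ω => alv j ω / (d * Rd (j-1) ω + 1) *
        (if e j ω < 1 / lam j ω then 1 else 0) / (1 - lam j ω)) μ := by
      have h1 := hmeasg.aestronglyMeasurable.mul (hIint j hj).1
      refine h1.congr (Eventually.of_forall fun ω => ?_)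
      simp only [Pi.mul_apply]
      ring
    refine (integrable_const α).mono' haesm ?_
    filter_upwards [hterm_bound j hj] with ω hω
    rw [Real.norm_eq_abs, abs_of_nonneg (hterm_nonneg j ω)]
    exact hω
  have hcint : ∀ j, 1 ≤ j → Integrable (fun ω => alv j ω / (d * Rd (j-1) ω + 1)) μ := by
    intro j hj
    refine (integrable_const (1:ℝ)).mono'
      ((hcmeas j hj).mono (hm _) le_rfl).aestronglyMeasurable ?_
    refine Eventually.of_forall fun ω => ?_
    rw [Real.norm_eq_abs, abs_of_nonneg (hc0 j ω)]
    exact hc1 j ω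
  have hceint : ∀ j, 1 ≤ j →
      Integrable (fun ω => alv j ω / (d * Rd (j-1) ω + 1) * e j ω) μ := by
    intro j hj
    refine (he_int j).mono'
      (((hcmeas j hj).mono (hm _) le_rfl).aestronglyMeasurable.mul (he_int j).1) ?_
    refine Eventually.of_forall fun ω => ?_
    simp only [Pi.mul_apply, Real.norm_eq_abs]
    rw [abs_of_nonneg (mul_nonneg (hc0 j ω) (he_nonneg j ω))]
    exact mul_le_of_le_one_left (he_nonneg j ω) (hc1 j ω)
  -- Step A : ∫ c e ≤ ∫ c for null j
  have hstepA : ∀ j, 1 ≤ j → j ∈ H0 →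
      ∫ ω, alv j ω / (d * Rd (j-1) ω + 1) * e j ω ∂μ ≤
        ∫ ω, alv j ω / (d * Rd (j-1) ω + 1) ∂μ := by
    intro j hj hjH0
    exact aux_int_mul_le (hm (j-1)) ((hcmeas j hj).stronglyMeasurable) (fun ω => hc0 j ω)
      (hcint j hj) (he_int j) (hceint j hj) (hvalid j hjH0)
  -- Step B : ∫ c ≤ ∫ term for null j
  have hstepB : ∀ j, 1 ≤ j → j ∈ H0 →
      ∫ ω, alv j ω / (d * Rd (j-1) ω + 1) ∂μ ≤
      ∫ ω, alv j ω / (d * Rd (j-1) ω + 1) *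
        (if e j ω < 1 / lam j ω then 1 else 0) / (1 - lam j ω) ∂μ := by
    intro j hj hjH0
    have hne : ∀ ω, (1:ℝ) - lam j ω ≠ 0 := fun ω => by linarith [(hlam j ω).2]
    set g : Ω → ℝ := fun ω => alv j ω / (d * Rd (j-1) ω + 1) / (1 - lam j ω) with hgdef
    have hgmeas : StronglyMeasurable[ℱ (j-1)] g :=
      ((hcmeas j hj).div (measurable_const.sub (hlam_meas j hj))).stronglyMeasurable
    have hg0 : ∀ ω, 0 ≤ g ω := fun ω => div_nonneg (hc0 j ω) (by linarith [(hlam j ω).2])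
    have hgh : Integrable (g * fun ω => if e j ω < 1 / lam j ω then (1:ℝ) else 0) μ := by
      refine (hterm_int j hj).congr (Eventually.of_forall fun ω => ?_)
      simp only [Pi.mul_apply, hgdef]
      ring
    have hgb : Integrable (fun ω => g ω * (1 - lam j ω)) μ := by
      refine (hcint j hj).congr (Eventually.of_forall fun ω => ?_)
      simp only [hgdef]
      exact (div_mul_cancel₀ _ (hne ω)).symm
    have hb := aux_markov (hm (j-1)) (fun ω => he_nonneg j ω) (he_int j) (fun ω => hlam j ω)
      ((hlam_meas j hj).stronglyMeasurable) (hIint j hj) (hvalid j hjH0)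
    have hkey := aux_int_le_mul (hm (j-1)) hgmeas hg0 (hIint j hj) hgh hgb hb
    calc ∫ ω, alv j ω / (d * Rd (j-1) ω + 1) ∂μ
        = ∫ ω, g ω * (1 - lam j ω) ∂μ := by
          refine integral_congr_ae (Eventually.of_forall fun ω => ?_)
          simp only [hgdef]
          exact (div_mul_cancel₀ _ (hne ω)).symm
      _ ≤ ∫ ω, g ω * (if e j ω < 1 / lam j ω then (1:ℝ) else 0) ∂μ := hkey
      _ = ∫ ω, alv j ω / (d * Rd (j-1) ω + 1) *
            (if e j ω < 1 / lam j ω then 1 else 0) / (1 - lam j ω) ∂μ := by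
          refine integral_congr_ae (Eventually.of_forall fun ω => ?_)
          simp only [hgdef]
          ring
  -- the assumed budget gives the bound on the integral of the full sum
  have hsumα : ∀ t, 1 ≤ t → ∫ ω, (∑ j ∈ Finset.Icc 1 t,
      alv j ω / (d * Rd (j-1) ω + 1) *
        (if e j ω < 1 / lam j ω then 1 else 0) / (1 - lam j ω)) ∂μ ≤ α := by
    intro t ht
    have h1 : Integrable (fun ω => ∑ j ∈ Finset.Icc 1 t,
        alv j ω / (d * Rd (j-1) ω + 1) *
          (if e j ω < 1 / lam j ω then 1 else 0) / (1 - lam j ω)) μ :=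
      integrable_finset_sum _ fun j hj => hterm_int j (Finset.mem_Icc.mp hj).1
    have h2 := integral_mono_ae h1 (integrable_const α)
      (by filter_upwards [hlevels] with ω hω; exact hω t ht)
    simpa using h2
  constructor
  · -- part (i)
    intro t ht
    calc ∫ ω, ∑ j ∈ (Finset.Icc 1 t).filter (· ∈ H0), alv j ω / (d * Rd (j-1) ω + 1) ∂μ
        = ∑ j ∈ (Finset.Icc 1 t).filter (· ∈ H0),
            ∫ ω, alv j ω / (d * Rd (j-1) ω + 1) ∂μ :=
          integral_finset_sum _ fun j hj => hcint j (hH0 j (Finset.mem_filter.mp hj).2)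
      _ ≤ ∑ j ∈ (Finset.Icc 1 t).filter (· ∈ H0),
            ∫ ω, alv j ω / (d * Rd (j-1) ω + 1) *
              (if e j ω < 1 / lam j ω then 1 else 0) / (1 - lam j ω) ∂μ := by
          refine Finset.sum_le_sum fun j hj => ?_
          have h2 := (Finset.mem_filter.mp hj).2
          exact hstepB j (hH0 j h2) h2
      _ ≤ ∑ j ∈ Finset.Icc 1 t,
            ∫ ω, alv j ω / (d * Rd (j-1) ω + 1) *
              (if e j ω < 1 / lam j ω then 1 else 0) / (1 - lam j ω) ∂μ :=
          Finset.sum_le_sum_of_subset_of_nonneg (Finset.filter_subset _ _)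
            (fun j _ _ => integral_nonneg fun ω => hterm_nonneg j ω)
      _ = ∫ ω, (∑ j ∈ Finset.Icc 1 t,
            alv j ω / (d * Rd (j-1) ω + 1) *
              (if e j ω < 1 / lam j ω then 1 else 0) / (1 - lam j ω)) ∂μ :=
          (integral_finset_sum _ fun j hj => hterm_int j (Finset.mem_Icc.mp hj).1).symm
  · -- part (ii)
    intro t ht
    have hptw : ∀ ω, (∑ j ∈ (Finset.Icc 1 t).filter (· ∈ H0), d ^ (t - j) * δ j ω) / max (Rd t ω) 1
        ≤ ∑ j ∈ (Finset.Icc 1 t).filter (· ∈ H0), alv j ω / (d * Rd (j-1) ω + 1) * e j ω := by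
      intro ω
      rw [Finset.sum_div]
      refine Finset.sum_le_sum fun j hj => ?_
      obtain ⟨hj1, hj2⟩ := Finset.mem_filter.mp hj
      obtain ⟨hj1a, hj1b⟩ := Finset.mem_Icc.mp hj1
      have hMpos : (0:ℝ) < max (Rd t ω) 1 := lt_of_lt_of_le one_pos (le_max_right _ _)
      rw [hδ j ω]
      split_ifs with h
      · have hae1 : 1 ≤ alv j ω * e j ω := by
          rw [div_le_iff₀ (halv j ω).1] at h
          linarith
        have hch : d ^ (t - j) * (d * Rd (j-1) ω + 1) ≤ max (Rd t ω) 1 := by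
          refine le_trans ?_ (le_max_left _ _)
          have hc := hchain t j ω hj1a hj1b
          rw [hδ j ω, if_pos h] at hc
          exact hc
        have hppos : (0:ℝ) < d ^ (t - j) := pow_pos hd.1 _
        rw [mul_one, div_mul_eq_mul_div, div_le_div_iff₀ hMpos (hdenpos (j-1) ω)]
        nlinarith [mul_nonneg (by linarith : (0:ℝ) ≤ alv j ω * e j ω - 1) hMpos.le]
      · rw [mul_zero, zero_div]
        exact mul_nonneg (hc0 j ω) (he_nonneg j ω)
    have hFDPint : Integrable (fun ω =>
        (∑ j ∈ (Finset.Icc 1 t).filter (· ∈ H0), d ^ (t - j) * δ j ω) / max (Rd t ω) 1) μ := by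
      have hmeas : Measurable fun ω =>
          (∑ j ∈ (Finset.Icc 1 t).filter (· ∈ H0), d ^ (t - j) * δ j ω) / max (Rd t ω) 1 :=
        (Finset.measurable_sum _ fun j _ => (hδm0 j).const_mul _).div
          ((hRdm0 t).max measurable_const)
      refine (integrable_const (1:ℝ)).mono' hmeas.aestronglyMeasurable
        (Eventually.of_forall fun ω => ?_)
      have hnum0 : 0 ≤ ∑ j ∈ (Finset.Icc 1 t).filter (· ∈ H0), d ^ (t - j) * δ j ω :=
        Finset.sum_nonneg fun j _ => mul_nonneg (pow_nonneg hd.1.le _) (hδ0 j ω)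
      have hMpos : (0:ℝ) < max (Rd t ω) 1 := lt_of_lt_of_le one_pos (le_max_right _ _)
      have hnumle : ∑ j ∈ (Finset.Icc 1 t).filter (· ∈ H0), d ^ (t - j) * δ j ω ≤
          max (Rd t ω) 1 := by
        refine le_trans ?_ (le_max_left _ _)
        rw [hRd t]
        exact Finset.sum_le_sum_of_subset_of_nonneg (Finset.filter_subset _ _)
          fun j _ _ => mul_nonneg (pow_nonneg hd.1.le _) (hδ0 j ω)
      rw [Real.norm_eq_abs, abs_of_nonneg (div_nonneg hnum0 hMpos.le)]
      exact div_le_one_of_le₀ hnumle hMpos.le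
    calc ∫ ω, (∑ j ∈ (Finset.Icc 1 t).filter (· ∈ H0), d ^ (t - j) * δ j ω) / max (Rd t ω) 1 ∂μ
        ≤ ∫ ω, ∑ j ∈ (Finset.Icc 1 t).filter (· ∈ H0),
            alv j ω / (d * Rd (j-1) ω + 1) * e j ω ∂μ :=
          integral_mono hFDPint (integrable_finset_sum _ fun j hj =>
            hceint j (hH0 j (Finset.mem_filter.mp hj).2)) hptw
      _ = ∑ j ∈ (Finset.Icc 1 t).filter (· ∈ H0),
            ∫ ω, alv j ω / (d * Rd (j-1) ω + 1) * e j ω ∂μ :=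
          integral_finset_sum _ fun j hj => hceint j (hH0 j (Finset.mem_filter.mp hj).2)
      _ ≤ ∑ j ∈ (Finset.Icc 1 t).filter (· ∈ H0),
            ∫ ω, alv j ω / (d * Rd (j-1) ω + 1) ∂μ := by
          refine Finset.sum_le_sum fun j hj => ?_
          have h2 := (Finset.mem_filter.mp hj).2
          exact hstepA j (hH0 j h2) h2
      _ ≤ ∑ j ∈ (Finset.Icc 1 t).filter (· ∈ H0),
            ∫ ω, alv j ω / (d * Rd (j-1) ω + 1) *
              (if e j ω < 1 / lam j ω then 1 else 0) / (1 - lam j ω) ∂μ := by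
          refine Finset.sum_le_sum fun j hj => ?_
          have h2 := (Finset.mem_filter.mp hj).2
          exact hstepB j (hH0 j h2) h2
      _ ≤ ∑ j ∈ Finset.Icc 1 t,
            ∫ ω, alv j ω / (d * Rd (j-1) ω + 1) *
              (if e j ω < 1 / lam j ω then 1 else 0) / (1 - lam j ω) ∂μ :=
          Finset.sum_le_sum_of_subset_of_nonneg (Finset.filter_subset _ _)
            (fun j _ _ => integral_nonneg fun ω => hterm_nonneg j ω)
      _ = ∫ ω, (∑ j ∈ Finset.Icc 1 t,
            alv j ω / (d * Rd (j-1) ω + 1) *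
              (if e j ω < 1 / lam j ω then 1 else 0) / (1 - lam j ω)) ∂μ :=
          (integral_finset_sum _ fun j hj => hterm_int j (Finset.mem_Icc.mp hj).1).symm
      _ ≤ α := hsumα t ht
end

section
/- Let (Ω, F, ℙ) be a probability space, G ⊆ F a sub-σ-algebra, and e : Ω → [0,∞) an integrable random variable with E[e | G] ≤ 1 almost surely. Define p = min(1/e, 1) (with the convention p = 1 when e = 0). Then for every u ∈ (0,1), E[1{p ≤ u} | G] ≤ u almost surely. -/
open MeasureTheory

theorem evalue_to_pvalue_superuniform
    {Ω : Type*} {m0 : MeasurableSpace Ω} {μ : Measure Ω} [IsProbabilityMeasure μ]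
    {G : MeasurableSpace Ω} (hG : G ≤ m0)
    (e : Ω → ℝ) (he_nonneg : ∀ ω, 0 ≤ e ω) (he_int : Integrable e μ)
    (he : μ[e | G] ≤ᵐ[μ] fun _ => 1)
    (p : Ω → ℝ) (hp : ∀ ω, p ω = if e ω = 0 then 1 else min (1 / e ω) 1) :
    ∀ u ∈ Set.Ioo (0:ℝ) 1,
      μ[(fun ω => if p ω ≤ u then (1:ℝ) else 0) | G] ≤ᵐ[μ] fun _ => u := by
  intro u hu
  obtain ⟨hu0, hu1⟩ := hu
  set f : Ω → ℝ := fun ω => if p ω ≤ u then (1:ℝ) else 0 with hf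
  -- pointwise characterization: p ω ≤ u ↔ u⁻¹ ≤ e ω
  have hiff : ∀ ω, (p ω ≤ u ↔ u⁻¹ ≤ e ω) := by
    intro ω
    rw [hp ω]
    by_cases h0 : e ω = 0
    · simp only [h0, if_pos]
      constructor
      · intro h; linarith
      · intro h; exfalso; have : 0 < u⁻¹ := by positivity
        linarith
    · have hepos : 0 < e ω := lt_of_le_of_ne (he_nonneg ω) (Ne.symm h0)
      rw [if_neg h0]
      constructor
      · intro h
        have h1 : 1 / e ω ≤ u := by
          rcases min_le_iff.mp h with h' | h'
          · exact h'
          · linarith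
        rw [div_le_iff₀ hepos] at h1
        rw [inv_le_iff_one_le_mul₀ hu0]
        linarith [mul_comm u (e ω)]
      · intro h
        have h1 : 1 ≤ u * e ω := by
          rw [inv_le_iff_one_le_mul₀ hu0] at h
          linarith [mul_comm (e ω) u]
        calc min (1 / e ω) 1 ≤ 1 / e ω := min_le_left _ _
          _ ≤ u := by rw [div_le_iff₀ hepos]; linarith
  have hfe : ∀ ω, f ω ≤ u * e ω := by
    intro ω
    by_cases h : p ω ≤ u
    · simp only [hf, if_pos h]
      have h1 : 1 ≤ u * e ω := by
        have := (hiff ω).mp h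
        rw [inv_le_iff_one_le_mul₀ hu0] at this
        linarith [mul_comm (e ω) u]
      exact h1
    · simp only [hf, if_neg h]
      have := he_nonneg ω
      positivity
  obtain ⟨e', he'_meas, he'_eq⟩ := he_int.aestronglyMeasurable
  have hmeas : AEStronglyMeasurable[m0] f μ := by
    refine ⟨fun ω => if u⁻¹ ≤ e' ω then 1 else 0, ?_, ?_⟩
    · exact (Measurable.ite (measurableSet_le measurable_const he'_meas.measurable)
        measurable_const measurable_const).stronglyMeasurable
    · filter_upwards [he'_eq] with ω hω
      simp only [hf, hiff ω, hω]
  have hf_int : Integrable f μ := by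
    refine (integrable_const (1:ℝ)).mono' hmeas (ae_of_all _ fun ω => ?_)
    simp only [hf]
    split <;> simp
  have hue_int : Integrable (fun ω => u * e ω) μ := he_int.const_mul u
  have h1 : μ[f | G] ≤ᵐ[μ] μ[fun ω => u * e ω | G] :=
    condExp_mono hf_int hue_int (ae_of_all _ hfe)
  have h2 : μ[fun ω => u * e ω | G] =ᵐ[μ] fun ω => u * (μ[e | G]) ω := by
    have := condExp_smul (μ := μ) (m := G) u e
    exact this
  filter_upwards [h1, h2, he] with ω hω1 hω2 hω3
  calc (μ[f | G]) ω ≤ (μ[fun ω => u * e ω | G]) ω := hω1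
    _ = u * (μ[e | G]) ω := hω2
    _ ≤ u * 1 := by have : (μ[e|G]) ω ≤ 1 := hω3; nlinarith
    _ = u := mul_one u
end
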